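/- arXiv:2510.05422 — 4 statements merged into one kernel-verified Lean document; each statement's English description precedes it below -/
import Mathlib

section
/- Let s ≥ 1 and r be integers with s+2 ≤ r ≤ 2s. Then for every integer n ≥ 2s+2, the Turán number of Berge matchings satisfies ex_r(n, BM_{s+1}) = C(2s+1, r). -/
open Finset

/-- `H` is an `r`-uniform hypergraph (an `r`-graph): every hyperedge has exactly `r` vertices. -/
def IsUniform {V : Type*} (r : ℕ) (H : Finset (Finset V)) : Prop :=
  ∀ e ∈ H, e.card = r

/-- `H` contains a Berge copy of the graph with edge set `F`: there are an injection `g`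
of the vertices of `F` into the vertices of `H` and an injection `φ` of the edges of `F`
into the hyperedges of `H` such that `g '' e ⊆ φ e` for every edge `e` of `F`. -/
def ContainsBerge {α V : Type*} [DecidableEq α] [DecidableEq V]
    (F : Finset (Finset α)) (H : Finset (Finset V)) : Prop :=
  ∃ (g : α → V) (φ : Finset α → Finset V),
    Function.Injective g ∧ Set.InjOn φ ↑F ∧
      (∀ e ∈ F, φ e ∈ H) ∧ ∀ e ∈ F, e.image g ⊆ φ e

/-- `H` contains a copy (a subhypergraph isomorphic to) of the hypergraph with
vertex set `A` and edge set `F`. -/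
def ContainsCopy {α V : Type*} [DecidableEq α] [DecidableEq V]
    (A : Finset α) (F : Finset (Finset α)) (H : Finset (Finset V)) : Prop :=
  ∃ g : α → V, Set.InjOn g ↑A ∧ ∀ e ∈ F, e.image g ∈ H

/-- The edge set of the matching `M_t` consisting of `t` pairwise disjoint edges. -/
def matchingHG (t : ℕ) : Finset (Finset (Fin t × Fin 2)) :=
  Finset.univ.image fun i : Fin t => ({(i, 0), (i, 1)} : Finset (Fin t × Fin 2))

/-- The Turán number: the maximum number of hyperedges in an `r`-graph on `n` vertices
satisfying the freeness predicate `Free`. -/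
noncomputable def exr (n r : ℕ) (Free : Finset (Finset (Fin n)) → Prop) : ℕ :=
  sSup {m | ∃ H : Finset (Finset (Fin n)), IsUniform r H ∧ Free H ∧ H.card = m}

/-! An `r`-graph on `2s + 1` vertices has no Berge `M_{s+1}`, which needs `2s + 2` vertices.
Conversely, call a list of edges a fresh chain if each edge has a vertex outside all later ones.
An `r`-graph without fresh chains of length `t + 1` has at most `C(r + t - 1, r)` edges, so more
than `C(2s + 1, r)` edges give a fresh chain of length `2s + 3 - r`. Padded with `r - s - 2`
further edges, this yields `s + 1` edges among which any `G` cover at least `2 #G` vertices (the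
chain edges add a vertex each), and Hall's theorem picks two private vertices in each of them. -/

section BergeMatching

variable {V : Type*}

theorem card_le_one_of_isUniform_zero {H : Finset (Finset V)} (hH : IsUniform 0 H) : #H ≤ 1 :=
  card_le_one.2 fun a ha b hb => by rw [card_eq_zero.1 (hH a ha), card_eq_zero.1 (hH b hb)]

def IsFreshChain : List (Finset V) → Prop
  | [] => True
  | a :: l => (∃ x ∈ a, ∀ b ∈ l, x ∉ b) ∧ IsFreshChain l

theorem IsFreshChain.nodup : ∀ {L : List (Finset V)}, IsFreshChain L → L.Nodup
  | [], _ => List.nodup_nil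
  | _ :: _, ⟨⟨_, hxa, hx⟩, h⟩ => List.nodup_cons.2 ⟨fun ha => hx _ ha hxa, h.nodup⟩

variable [DecidableEq V]

namespace IsFreshChain

theorem map_insert {v : V} : ∀ {L : List (Finset V)}, IsFreshChain L → (∀ a ∈ L, v ∉ a) →
    IsFreshChain (L.map (insert v))
  | [], _, _ => trivial
  | a :: l, ⟨⟨x, hxa, hx⟩, h⟩, hv => by
    refine ⟨⟨x, mem_insert_of_mem hxa, ?_⟩,
      h.map_insert fun b hb => hv b (List.mem_cons_of_mem _ hb)⟩
    rintro _ hb' hxb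
    obtain ⟨b, hb, rfl⟩ := List.mem_map.1 hb'
    rcases mem_insert.1 hxb with rfl | hxb
    · exact hv a List.mem_cons_self hxa
    · exact hx b hb hxb

theorem card_add_le_card_biUnion {r : ℕ} : ∀ {L : List (Finset V)}, IsFreshChain L →
    (∀ e ∈ L, r ≤ #e) → ∀ G ⊆ L.toFinset, G.Nonempty → r + #G ≤ #(G.biUnion id) + 1
  | [], _, _, G, hG, hne => by simp_all
  | a :: l, ⟨⟨x, hxa, hx⟩, h⟩, hr, G, hG, hne => by
    have hrl : ∀ e ∈ l, r ≤ #e := fun e he => hr e (List.mem_cons_of_mem _ he)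
    have hGl : G.erase a ⊆ l.toFinset := fun e he => by
      have := hG (mem_of_mem_erase he)
      simp only [List.toFinset_cons, mem_insert] at this
      exact this.resolve_left (ne_of_mem_erase he)
    by_cases ha : a ∈ G
    swap
    · exact h.card_add_le_card_biUnion hrl G (by rwa [← erase_eq_of_notMem ha]) hne
    rw [← insert_erase ha, biUnion_insert, card_insert_of_notMem (notMem_erase a G)]
    rcases (G.erase a).eq_empty_or_nonempty with hempty | hne'
    · simpa [hempty] using hr a List.mem_cons_self
    have ih := h.card_add_le_card_biUnion hrl _ hGl hne'
    have hxG : x ∉ (G.erase a).biUnion id := fun hxG => by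
      obtain ⟨b, hb, hxb⟩ := mem_biUnion.1 hxG
      exact hx b (List.mem_toFinset.1 (hGl hb)) hxb
    have : #((G.erase a).biUnion id) + 1 ≤ #(id a ∪ (G.erase a).biUnion id) := by
      rw [← card_insert_of_notMem hxG]
      exact card_le_card (insert_subset (mem_union_left _ hxa) subset_union_right)
    omega

end IsFreshChain

/-- Split the edges at a vertex `v`: the link of `v` has no fresh chain of length `t + 1` either,
while the edges avoiding `v` have none of length `t`, since an edge through `v` can be put in
front of such a chain. Pascal's rule adds up the two bounds. -/
theorem card_le_choose_of_isFreshChain_length_le {r t : ℕ} {H : Finset (Finset V)}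
    (hH : IsUniform r H)
    (hchain : ∀ L : List (Finset V), (∀ e ∈ L, e ∈ H) → IsFreshChain L → L.length ≤ t) :
    #H ≤ (r + t - 1).choose r := by
  induction t generalizing r H with
  | zero =>
    rcases r.eq_zero_or_pos with rfl | hr
    · simpa using card_le_one_of_isUniform_zero hH
    rcases H.eq_empty_or_nonempty with rfl | ⟨e, he⟩
    · simp
    have hfresh : IsFreshChain [e] := by
      obtain ⟨x, hx⟩ := card_pos.1 ((hH e he).symm ▸ hr)
      exact ⟨⟨x, hx, by simp⟩, trivial⟩
    simpa using hchain [e] (by simpa using he) hfresh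
  | succ t iht =>
    induction r generalizing H with
    | zero => simpa using card_le_one_of_isUniform_zero hH
    | succ r ihr =>
      rcases H.eq_empty_or_nonempty with rfl | ⟨e₀, he₀⟩
      · simp
      obtain ⟨v, hv⟩ := card_pos.1 (by rw [hH e₀ he₀]; omega)
      have hlink : #(H.memberSubfamily v) ≤ (r + t).choose r := by
        refine ihr (fun e he => ?_) fun L hL hfresh => ?_
        · obtain ⟨heH, hve⟩ := mem_memberSubfamily.1 he
          simpa [card_insert_of_notMem hve] using hH _ heH
        · have hv : ∀ a ∈ L, v ∉ a := fun a ha => (mem_memberSubfamily.1 (hL a ha)).2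
          simpa using hchain (L.map (insert v))
            (by simpa using fun a ha => (mem_memberSubfamily.1 (hL a ha)).1)
            (hfresh.map_insert hv)
      have hrest : #(H.nonMemberSubfamily v) ≤ (r + t).choose (r + 1) := by
        have h := iht (fun e he => hH e (mem_nonMemberSubfamily.1 he).1) fun L hL hfresh => by
          have hLH : ∀ e ∈ e₀ :: L, e ∈ H := by
            simpa [he₀] using fun e he => (mem_nonMemberSubfamily.1 (hL e he)).1
          simpa using hchain (e₀ :: L) hLH
            ⟨⟨v, hv, fun b hb => (mem_nonMemberSubfamily.1 (hL b hb)).2⟩, hfresh⟩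
        rwa [Nat.add_right_comm, Nat.add_sub_cancel] at h
      rw [← card_memberSubfamily_add_card_nonMemberSubfamily v H,
        show r + 1 + (t + 1) - 1 = r + t + 1 by omega, Nat.choose_succ_succ']
      omega

theorem two_mul_card_le_card_biUnion {r : ℕ} {F C G : Finset (Finset V)}
    (hF : ∀ e ∈ F, #e = r) (hCF : C ⊆ F) (hC : C.Nonempty)
    (hgrowth : ∀ G ⊆ C, G.Nonempty → r + #G ≤ #(G.biUnion id) + 1)
    (hFr : #F + #(F \ C) < r) (hG : G ⊆ F) :
    2 * #G ≤ #(G.biUnion id) := by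
  have hsplit := card_inter_add_card_sdiff G C
  have hGC : #(G \ C) ≤ #(F \ C) := card_le_card (sdiff_subset_sdiff hG subset_rfl)
  have hFG := card_le_card hG
  rcases (G ∩ C).eq_empty_or_nonempty with hempty | hne
  · rcases G.eq_empty_or_nonempty with rfl | ⟨e, he⟩
    · simp
    have hFC : #(F \ C) < #F := card_lt_card (sdiff_ssubset hCF hC)
    have : r ≤ #(G.biUnion id) := hF e (hG he) ▸ card_le_card (subset_biUnion_of_mem id he)
    rw [hempty, card_empty] at hsplit
    omega
  · have := hgrowth _ inter_subset_right hne
    have : #((G ∩ C).biUnion id) ≤ #(G.biUnion id) :=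
      card_le_card (biUnion_subset_biUnion_of_subset_left _ inter_subset_left)
    omega

theorem containsBerge_matchingHG_of_injective {t : ℕ} {H : Finset (Finset V)}
    (e : Fin t → Finset V) (he : Function.Injective e) (heH : ∀ i, e i ∈ H)
    (g : Fin t × Fin 2 → V) (hg : Function.Injective g) (hge : ∀ p, g p ∈ e p.1) :
    ContainsBerge (matchingHG t) H := by
  set edge : Fin t → Finset (Fin t × Fin 2) := fun i => {(i, 0), (i, 1)}
  have hedge : Function.Injective edge := fun i j hij => by
    simpa [edge] using (Finset.ext_iff.1 hij (i, 0)).1 (by simp [edge])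
  have hext : ∀ i, Function.extend edge e (fun _ => ∅) {(i, 0), (i, 1)} = e i :=
    hedge.extend_apply e _
  refine ⟨g, Function.extend edge e fun _ => ∅, hg, ?_, ?_, ?_⟩
  · intro E hE E' hE' hij
    obtain ⟨i, -, rfl⟩ := mem_image.1 hE
    obtain ⟨j, -, rfl⟩ := mem_image.1 hE'
    rw [hext, hext] at hij
    rw [he hij]
  · intro E hE
    obtain ⟨i, -, rfl⟩ := mem_image.1 hE
    simpa [hext] using heH i
  · intro E hE
    obtain ⟨i, -, rfl⟩ := mem_image.1 hE
    intro y hy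
    obtain ⟨p, hp, rfl⟩ := mem_image.1 hy
    have hpi : p.1 = i := by
      rcases mem_insert.1 hp with rfl | hp
      · rfl
      · rw [mem_singleton.1 hp]
    exact hext i ▸ hpi ▸ hge p

theorem containsBerge_matchingHG_of_hall {t : ℕ} {F H : Finset (Finset V)} (hFH : F ⊆ H)
    (hF : #F = t) (hall : ∀ G ⊆ F, 2 * #G ≤ #(G.biUnion id)) :
    ContainsBerge (matchingHG t) H := by
  set e : Fin t → Finset V := fun i => (F.equivFinOfCardEq hF).symm i
  have he : Function.Injective e := Subtype.val_injective.comp (Equiv.injective _)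
  have heF : ∀ i, e i ∈ F := fun i => ((F.equivFinOfCardEq hF).symm i).2
  obtain ⟨g, hg, hge⟩ :=
    (all_card_le_biUnion_card_iff_exists_injective fun p : Fin t × Fin 2 => e p.1).1 fun S => by
    have hS : #S ≤ 2 * #(S.image Prod.fst) := calc
      #S ≤ #(S.image Prod.fst ×ˢ S.image Prod.snd) := card_le_card subset_product
      _ ≤ 2 * #(S.image Prod.fst) := by
        rw [card_product, mul_comm]
        exact Nat.mul_le_mul_right _ ((card_le_univ _).trans (by simp))
    have := hall ((S.image Prod.fst).image e) fun E hE => by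
      obtain ⟨i, -, rfl⟩ := mem_image.1 hE
      exact heF i
    rw [card_image_of_injective _ he, image_biUnion, image_biUnion] at this
    exact hS.trans this
  exact containsBerge_matchingHG_of_injective e he (fun i => hFH (heF i)) g hg hge

theorem containsBerge_matchingHG_of_choose_lt_card {s r : ℕ} (hr1 : s + 2 ≤ r)
    (hr2 : r ≤ 2 * s) {H : Finset (Finset V)} (hH : IsUniform r H)
    (hcard : (2 * s + 1).choose r < #H) :
    ContainsBerge (matchingHG (s + 1)) H := by
  obtain ⟨L, hLH, hL, hlen⟩ : ∃ L : List (Finset V), (∀ e ∈ L, e ∈ H) ∧ IsFreshChain L ∧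
      2 * s + 2 - r < L.length := by
    by_contra! h
    have := card_le_choose_of_isFreshChain_length_le hH h
    rw [show r + (2 * s + 2 - r) - 1 = 2 * s + 1 by omega] at this
    omega
  obtain ⟨C, hCL, hC⟩ := exists_subset_card_eq
    (show 2 * s + 3 - r ≤ #L.toFinset by rw [List.toFinset_card_of_nodup hL.nodup]; omega)
  have hCH : C ⊆ H := fun e he => hLH e (List.mem_toFinset.1 (hCL he))
  have hsH : s + 1 ≤ #H := calc
    s + 1 ≤ (r + 1).choose r := by rw [Nat.choose_succ_self_right]; omega
    _ ≤ (2 * s + 1).choose r := Nat.choose_le_choose r (by omega)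
    _ ≤ #H := hcard.le
  obtain ⟨F, hCF, hFH, hF⟩ := exists_subsuperset_card_eq hCH (by omega) hsH
  refine containsBerge_matchingHG_of_hall hFH hF fun G hG => ?_
  refine two_mul_card_le_card_biUnion (fun e he => hH e (hFH he)) hCF (card_pos.1 (by omega))
    (fun G hGC => hL.card_add_le_card_biUnion (fun e he => (hH e (hLH e he)).ge) G
      (hGC.trans hCL)) ?_ hG
  rw [card_sdiff_of_subset hCF]
  omega

theorem not_containsBerge_matchingHG_of_subset {t : ℕ} {S : Finset V} {H : Finset (Finset V)}
    (hS : #S < 2 * t) (hHS : ∀ e ∈ H, e ⊆ S) : ¬ ContainsBerge (matchingHG t) H := by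
  rintro ⟨g, φ, hg, -, hφH, hgφ⟩
  have himage : univ.image g ⊆ S := by
    rintro _ hx
    obtain ⟨⟨i, b⟩, -, rfl⟩ := mem_image.1 hx
    have hi : ({(i, 0), (i, 1)} : Finset (Fin t × Fin 2)) ∈ matchingHG t :=
      mem_image_of_mem _ (mem_univ i)
    exact hHS _ (hφH _ hi) (hgφ _ hi (mem_image_of_mem g (by fin_cases b <;> simp)))
  have := card_le_card himage
  rw [card_image_of_injective _ hg, card_univ, Fintype.card_prod, Fintype.card_fin,
    Fintype.card_fin] at this
  omega

end BergeMatching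

theorem exr_eq_of_forall_card_le {n r m : ℕ} {Free : Finset (Finset (Fin n)) → Prop}
    (hex : ∃ H, IsUniform r H ∧ Free H ∧ #H = m)
    (hle : ∀ H, IsUniform r H → Free H → #H ≤ m) : exr n r Free = m :=
  IsGreatest.csSup_eq ⟨hex, by rintro _ ⟨H, hH, hfree, rfl⟩; exact hle H hH hfree⟩

theorem exr_berge_matching_middle_r_general
    (s r : ℕ) (hr1 : s + 2 ≤ r) (hr2 : r ≤ 2 * s)
    (n : ℕ) (hn : 2 * s + 2 ≤ n) :
    exr n r (fun H => ¬ ContainsBerge (matchingHG (s + 1)) H) =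
      Nat.choose (2 * s + 1) r := by
  set S : Finset (Fin n) := univ.map (Fin.castLEEmb (by omega : 2 * s + 1 ≤ n))
  have hS : #S = 2 * s + 1 := by simp [S]
  have hfree : ¬ ContainsBerge (matchingHG (s + 1)) (S.powersetCard r) :=
    not_containsBerge_matchingHG_of_subset (by omega) fun e he => (mem_powersetCard.1 he).1
  refine exr_eq_of_forall_card_le ⟨S.powersetCard r, fun e he => (mem_powersetCard.1 he).2,
    hfree, by rw [card_powersetCard, hS]⟩ fun H hH hHfree => ?_
  by_contra! hcard
  exact hHfree (containsBerge_matchingHG_of_choose_lt_card hr1 hr2 hH hcard)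

/-- Theorem: for `s ≥ 1`, `s+2 ≤ r ≤ 2s` and every `n ≥ 2s+2`,
`ex_r(n, BM_{s+1}) = C(2s+1, r)`. -/
theorem exr_berge_matching_middle_r
    (s r : ℕ) (hs : 1 ≤ s) (hr1 : s + 2 ≤ r) (hr2 : r ≤ 2 * s)
    (n : ℕ) (hn : 2 * s + 2 ≤ n) :
    exr n r (fun H => ¬ ContainsBerge (matchingHG (s + 1)) H) =
      Nat.choose (2 * s + 1) r :=
  exr_berge_matching_middle_r_general s r hr1 hr2 n hn
end

section
/- Let s ≥ 1 and r be integers with 2 ≤ r ≤ s+1, and let F be a fixed r-graph such that either χ(F) > 2, or χ(F) = 2 and F admits no strong red-blue coloring (i.e., q(F) = ∞). Then there exists n₀ such that for all n ≥ n₀, ex_r(n, BM_{s+1} ∪ {F}) = ex_r(s, D(F)) + C(s, r−1)·(n−s), where D(F) is the family of r-graphs obtained from F by deleting a (possibly empty) strongly independent set of vertices. -/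
open Finset

/-- The hypergraph with edge set `F` admits a proper `k`-coloring:
an assignment of `k` colors to the vertices with no monochromatic hyperedge. -/
def HasProperColoring {V : Type*} (k : ℕ) (F : Finset (Finset V)) : Prop :=
  ∃ c : V → Fin k, ∀ e ∈ F, ∃ u ∈ e, ∃ v ∈ e, c u ≠ c v

/-- The hypergraph with edge set `F` admits a strong red-blue coloring:
a set `red` of vertices meeting every hyperedge in exactly one vertex
(the remaining vertices being blue).  `q(F) = ∞` means no such coloring exists. -/
def HasStrongColoring {V : Type*} [DecidableEq V] (F : Finset (Finset V)) : Prop :=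
  ∃ red : Finset V, ∀ e ∈ F, (e ∩ red).card = 1

/-- `S` is a strongly independent set of the hypergraph with edge set `F`:
it meets every hyperedge in at most one vertex. -/
def StronglyIndep {V : Type*} [DecidableEq V] (F : Finset (Finset V)) (S : Finset V) : Prop :=
  ∀ e ∈ F, (e ∩ S).card ≤ 1

/-!
Let `H` be an `r`-graph on `n` vertices with no Berge matching of size `s + 1`. A high-degree
vertex can always be matched greedily, so at most `s` vertices have degree above a constant;
let `A` be the set of them. A hyperedge outside a maximum Berge matching has at most one vertex
outside the matching's vertices, so a hyperedge with two vertices outside `A` lies in the matching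
or passes through one of its low-degree vertices: there are boundedly many. If `|A| < s`, the
hyperedges with exactly one vertex outside `A` are too few. If `|A| = s`, either some
`(r - 1)`-subset of `A` misses many of its crossing hyperedges, which pays for all other
hyperedges, or almost every vertex outside `A` forms a hyperedge with every `(r - 1)`-subset of
`A`. In the latter case no hyperedge has two vertices outside `A` (it would extend a Berge
matching of size `s` through such vertices), and a member of `D(F)` inside `A` would extend to a
copy of `F` by sending the deleted strongly independent set to such vertices. The bound is attained
by an extremal `D(F)`-free `r`-graph on `s` vertices together with all `r`-sets meeting it in
`r - 1` vertices.
-/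

namespace BergeTuran

variable {V : Type*}

structure IsBergeMatching (H : Finset (Finset V)) {t : ℕ} (x y : Fin t → V)
    (e : Fin t → Finset V) : Prop where
  injective_vertices : Function.Injective (Sum.elim x y)
  injective_edges : Function.Injective e
  edge_mem : ∀ i, e i ∈ H
  left_mem : ∀ i, x i ∈ e i
  right_mem : ∀ i, y i ∈ e i

def HasBergeMatching (H : Finset (Finset V)) (t : ℕ) : Prop :=
  ∃ (x y : Fin t → V) (e : Fin t → Finset V), IsBergeMatching H x y e

theorem isBergeMatching_zero (H : Finset (Finset V)) (x y : Fin 0 → V)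
    (e : Fin 0 → Finset V) : IsBergeMatching H x y e :=
  ⟨fun a => by cases a <;> exact Fin.elim0 ‹_›, fun i => i.elim0, fun i => i.elim0,
    fun i => i.elim0, fun i => i.elim0⟩

theorem IsBergeMatching.cons {H : Finset (Finset V)} {t : ℕ} {x y : Fin t → V}
    {e : Fin t → Finset V} (hM : IsBergeMatching H x y e) {f : Finset V} {u v : V}
    (hf : f ∈ H) (hfe : f ∉ Set.range e) (hu : u ∈ f) (hv : v ∈ f) (huv : u ≠ v)
    (hu' : u ∉ Set.range (Sum.elim x y)) (hv' : v ∉ Set.range (Sum.elim x y)) :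
    IsBergeMatching H (Fin.cons u x) (Fin.cons v y) (Fin.cons f e) := by
  obtain ⟨hx, hy, hxy⟩ := Sum.elim_injective.1 hM.injective_vertices
  simp only [Set.Sum.elim_range, Set.mem_union, not_or] at hu' hv'
  refine ⟨Sum.elim_injective.2 ⟨Fin.cons_injective_iff.2 ⟨hu'.1, hx⟩,
    Fin.cons_injective_iff.2 ⟨hv'.2, hy⟩, fun i j => ?_⟩,
    Fin.cons_injective_iff.2 ⟨hfe, hM.injective_edges⟩,
    Fin.cases hf hM.edge_mem, Fin.cases hu hM.left_mem, Fin.cases hv hM.right_mem⟩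
  cases i using Fin.cases <;> cases j using Fin.cases <;>
    simp only [Fin.cons_zero, Fin.cons_succ]
  · exact huv
  · exact fun h => hu'.2 ⟨_, h.symm⟩
  · exact fun h => hv'.1 ⟨_, h⟩
  · exact hxy _ _

theorem exists_injective_of_card_le_card {α : Type*} [Fintype α] {C : Finset V}
    (h : Fintype.card α ≤ #C) : ∃ y : α → V, Function.Injective y ∧ ∀ i, y i ∈ C := by
  obtain ⟨w⟩ := Function.Embedding.nonempty_of_card_le (α := α) (β := C) (by simpa using h)
  exact ⟨fun i => w i, Subtype.val_injective.comp w.injective, fun i => (w i).2⟩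

variable [DecidableEq V]

theorem containsBerge_matchingHG_iff {H : Finset (Finset V)} {t : ℕ} :
    ContainsBerge (matchingHG t) H ↔ HasBergeMatching H t := by
  set pair : Fin t → Finset (Fin t × Fin 2) := fun i => {(i, 0), (i, 1)}
  have hpair : Function.Injective pair := fun i j h => by
    simpa [pair] using congrArg ((i, 0) ∈ ·) h
  have hmem : ∀ i, pair i ∈ matchingHG t := fun i => mem_image_of_mem _ (mem_univ i)
  constructor
  · rintro ⟨g, φ, hg, hφ, hφH, hgφ⟩
    refine ⟨fun i => g (i, 0), fun i => g (i, 1), fun i => φ (pair i),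
      ⟨Sum.elim_injective.2 ⟨?_, ?_, ?_⟩, ?_, fun i => hφH _ (hmem i), ?_, ?_⟩⟩
    · exact fun i j h => by simpa using hg h
    · exact fun i j h => by simpa using hg h
    · exact fun i j h => by simpa using hg h
    · exact fun i j h => hpair (hφ (hmem i) (hmem j) h)
    · exact fun i => hgφ _ (hmem i) (by simp [pair])
    · exact fun i => hgφ _ (hmem i) (by simp [pair])
  · rintro ⟨x, y, e, hM⟩
    obtain ⟨hx, hy, hxy⟩ := Sum.elim_injective.1 hM.injective_vertices
    have hφ : ∀ i, Function.extend pair e (fun _ => ∅) (pair i) = e i := hpair.extend_apply _ _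
    have hmatch : (matchingHG t : Set _) = Set.range pair := by simp [matchingHG, pair]
    refine ⟨fun p => ![x p.1, y p.1] p.2, Function.extend pair e (fun _ => ∅), ?_, ?_, ?_, ?_⟩
    · rintro ⟨i, a⟩ ⟨j, b⟩ h
      fin_cases a <;> fin_cases b <;> simp at h
      · simp [hx h]
      · exact absurd h (hxy i j)
      · exact absurd h.symm (hxy j i)
      · simp [hy h]
    · rw [hmatch]
      rintro _ ⟨i, rfl⟩ _ ⟨j, rfl⟩ h
      rw [hφ, hφ] at h
      rw [hM.injective_edges h]
    all_goals
      intro E hE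
      obtain ⟨i, rfl⟩ : E ∈ Set.range pair := hmatch ▸ mem_coe.2 hE
      rw [hφ]
    · exact hM.edge_mem i
    · simp [pair, insert_subset_iff, hM.left_mem, hM.right_mem]

theorem HasBergeMatching.le_card {H : Finset (Finset V)} {t : ℕ} (hM : HasBergeMatching H t)
    {A : Finset V} (hA : ∀ f ∈ H, #(f \ A) ≤ 1) : t ≤ #A := by
  obtain ⟨x, y, e, hM⟩ := hM
  obtain ⟨hx, hy, hxy⟩ := Sum.elim_injective.1 hM.injective_vertices
  have hxyA : ∀ i, x i ∉ A → y i ∈ A := fun i hxA => by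
    by_contra hyA
    exact (hA _ (hM.edge_mem i)).not_gt (one_lt_card.2 ⟨x i, mem_sdiff.2 ⟨hM.left_mem i, hxA⟩,
      y i, mem_sdiff.2 ⟨hM.right_mem i, hyA⟩, hxy i i⟩)
  let c i := if x i ∈ A then x i else y i
  calc t = #(univ : Finset (Fin t)) := by simp
    _ ≤ #A := card_le_card_of_injOn c (fun i _ => mem_coe.2 (by
        dsimp only [c]; split_ifs with h; exacts [h, hxyA i h])) fun i _ j _ h => by
        by_cases hi : x i ∈ A <;> by_cases hj : x j ∈ A <;>
          simp only [c, hi, hj, if_true, if_false] at h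
        exacts [hx h, absurd h (hxy i j), absurd h.symm (hxy j i), hy h]

theorem exists_cover_of_not_hasBergeMatching {H : Finset (Finset V)} {s : ℕ}
    (h : ¬HasBergeMatching H (s + 1)) :
    ∃ (E : Finset (Finset V)) (U : Finset V),
      #E ≤ s ∧ #U ≤ 2 * s ∧ ∀ f ∈ H, f ∉ E → #(f \ U) ≤ 1 := by
  classical
  set t := Nat.findGreatest (HasBergeMatching H) s
  have hts : t ≤ s := Nat.findGreatest_le s
  have hmax : ¬HasBergeMatching H (t + 1) := by
    rcases hts.lt_or_eq with hlt | heq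
    · exact Nat.findGreatest_is_greatest (Nat.lt_succ_self t) hlt
    · exact heq ▸ h
  obtain ⟨x, y, e, hM⟩ : HasBergeMatching H t := Nat.findGreatest_spec (Nat.zero_le s)
    ⟨_, _, _, isBergeMatching_zero H Fin.elim0 Fin.elim0 Fin.elim0⟩
  refine ⟨univ.image e, univ.image (Sum.elim x y), ?_, ?_, fun f hf hfE => ?_⟩
  · exact card_image_le.trans (by simpa using hts)
  · exact card_image_le.trans (by simp; omega)
  by_contra! h2
  obtain ⟨u, hu, v, hv, huv⟩ := one_lt_card.1 h2
  simp only [mem_sdiff, mem_image, mem_univ, true_and, not_exists] at hu hv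
  exact hmax ⟨_, _, _, hM.cons hf (by simpa using hfE) hu.1 hv.1 huv
    (fun ⟨i, hi⟩ => hu.2 i hi) (fun ⟨i, hi⟩ => hv.2 i hi)⟩

def degree (H : Finset (Finset V)) (v : V) : ℕ := #(H.filter (v ∈ ·))

theorem card_filter_mem_subset_le {r : ℕ} {H : Finset (Finset V)} (hH : IsUniform r H)
    (v : V) (W : Finset V) : #(H.filter fun f => v ∈ f ∧ f ⊆ W) ≤ (#W).choose (r - 1) := by
  rw [← card_powersetCard]
  refine card_le_card_of_injOn (·.erase v) (fun f hf => ?_) (fun f hf f' hf' h => ?_)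
  · simp only [mem_coe, mem_filter] at hf
    simp [mem_powersetCard, card_erase_of_mem hf.2.1, hH f hf.1,
      (erase_subset v f).trans hf.2.2]
  · simp only [mem_coe, mem_filter] at hf hf'
    rw [← insert_erase hf.2.1, ← insert_erase hf'.2.1]
    exact congrArg (insert v) h

theorem exists_mem_not_subset_of_degree {r : ℕ} {H : Finset (Finset V)} (hH : IsUniform r H)
    {v : V} (E : Finset (Finset V)) (W : Finset V)
    (hv : #E + (#W).choose (r - 1) < degree H v) : ∃ f ∈ H, v ∈ f ∧ f ∉ E ∧ ¬f ⊆ W := by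
  by_contra! h
  have hsub : H.filter (v ∈ ·) ⊆ E ∪ H.filter fun f => v ∈ f ∧ f ⊆ W := fun f hf => by
    simp only [mem_filter, mem_union] at hf ⊢
    by_cases hfE : f ∈ E
    · exact .inl hfE
    · exact .inr ⟨hf.1, hf.2, h f hf.1 hf.2 hfE⟩
  have := (card_le_card hsub).trans (card_union_le _ _)
  have := card_filter_mem_subset_le hH v W
  exact hv.not_ge (by unfold degree; omega)

/-- Greedy: the degree of `w 0` exceeds the number of hyperedges used for the other `w i` plus
the number of hyperedges through `w 0` inside the vertices used so far. -/
theorem exists_isBergeMatching_of_degree {r : ℕ} {H : Finset (Finset V)} (hH : IsUniform r H)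
    (Z : Finset V) {k : ℕ} (w : Fin k → V) (hw : Function.Injective w) (hwZ : ∀ i, w i ∈ Z)
    (hdeg : ∀ i, k + (#Z + k).choose (r - 1) < degree H (w i)) :
    ∃ (y : Fin k → V) (e : Fin k → Finset V), IsBergeMatching H w y e ∧ ∀ i, y i ∉ Z := by
  induction k with
  | zero => exact ⟨_, Fin.elim0, isBergeMatching_zero H w Fin.elim0 _, fun i => i.elim0⟩
  | succ k ih =>
    obtain ⟨y, e, hM, hyZ⟩ := ih (Fin.tail w) (hw.comp (Fin.succ_injective _))
      (fun i => hwZ _) fun i => (hdeg i.succ).trans_le'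
        (Nat.add_le_add (by omega) (Nat.choose_le_choose _ (by omega)))
    have hW : #(Z ∪ univ.image y) ≤ #Z + k :=
      (card_union_le _ _).trans (by simpa using card_image_le (s := univ) (f := y))
    obtain ⟨f, hf, hwf, hfe, hfW⟩ := exists_mem_not_subset_of_degree hH (univ.image e)
      (Z ∪ univ.image y) ((hdeg 0).trans_le'
        (Nat.add_le_add ((card_image_le.trans (by simp)).trans (Nat.le_succ k))
          (Nat.choose_le_choose _ (hW.trans (by omega)))))
    obtain ⟨v, hvf, hvW⟩ := not_subset.1 hfW
    simp only [mem_union, mem_image, mem_univ, true_and, not_or, not_exists] at hvW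
    have hcons := hM.cons hf (by simpa using hfe) hwf hvf (fun h => hvW.1 (h ▸ hwZ 0))
      (by
        rintro ⟨i | i, hi⟩ <;> simp only [Sum.elim_inl, Sum.elim_inr, Fin.tail] at hi
        · exact hw.ne (Fin.succ_ne_zero i) hi
        · exact hyZ i (hi ▸ hwZ 0))
      (by
        rintro ⟨i | i, hi⟩ <;> simp only [Sum.elim_inl, Sum.elim_inr, Fin.tail] at hi
        · exact hvW.1 (hi ▸ hwZ _)
        · exact hvW.2 i hi)
    rw [Fin.cons_self_tail] at hcons
    exact ⟨_, _, hcons, Fin.cases hvW.1 hyZ⟩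

theorem card_le_of_lt_degree {r s : ℕ} {H : Finset (Finset V)} (hH : IsUniform r H)
    (hB : ¬HasBergeMatching H (s + 1)) {A : Finset V}
    (hA : ∀ v ∈ A, s + 1 + (2 * (s + 1)).choose (r - 1) < degree H v) : #A ≤ s := by
  by_contra! hlt
  obtain ⟨w, hw, hwA⟩ := exists_injective_of_card_le_card (α := Fin (s + 1)) (by simpa using hlt)
  have hZ : #(univ.image w) = s + 1 := by simp [card_image_of_injective _ hw]
  obtain ⟨y, e, hM, -⟩ := exists_isBergeMatching_of_degree hH (univ.image w) w hw
    (fun i => mem_image_of_mem _ (mem_univ i)) fun i => by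
      rw [hZ, ← two_mul]; exact hA _ (hwA i)
  exact hB ⟨w, y, e, hM⟩

theorem card_filter_two_le_card_sdiff_le {H : Finset (Finset V)} {s D : ℕ}
    (hB : ¬HasBergeMatching H (s + 1)) (A : Finset V) (hA : ∀ v ∉ A, degree H v ≤ D) :
    #(H.filter fun f => 2 ≤ #(f \ A)) ≤ s + 2 * s * D := by
  obtain ⟨E, U, hE, hU, hcover⟩ := exists_cover_of_not_hasBergeMatching hB
  have hsub :
      H.filter (fun f => 2 ≤ #(f \ A)) ⊆ E ∪ (U \ A).biUnion fun v => H.filter (v ∈ ·) := by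
    intro f hf
    rw [mem_filter] at hf
    by_cases hfE : f ∈ E
    · exact mem_union_left _ hfE
    obtain ⟨v, hvA, hvU⟩ := exists_mem_notMem_of_card_lt_card
      ((hcover f hf.1 hfE).trans_lt hf.2)
    simp only [mem_sdiff, not_and, not_not] at hvA hvU
    exact mem_union_right _ (mem_biUnion.2 ⟨v, mem_sdiff.2 ⟨hvU hvA.1, hvA.2⟩,
      mem_filter.2 ⟨hf.1, hvA.1⟩⟩)
  have hUA := card_biUnion_le_card_mul (U \ A) (fun v => H.filter (v ∈ ·)) D
    fun v hv => hA v (mem_sdiff.1 hv).2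
  have := card_le_card (sdiff_subset (s := U) (t := A))
  have := Nat.mul_le_mul_right D (this.trans hU)
  have := (card_le_card hsub).trans (card_union_le _ _)
  omega

theorem card_filter_subset_le {r : ℕ} {H : Finset (Finset V)} (hH : IsUniform r H) (A : Finset V) :
    #(H.filter (· ⊆ A)) ≤ (#A).choose r := by
  rw [← card_powersetCard]
  exact card_le_card fun f hf => by
    rw [mem_filter] at hf
    exact mem_powersetCard.2 ⟨hf.2, hH f hf.1⟩

theorem insert_inter_eq_and_insert_sdiff_eq {A B : Finset V} {v : V} (hB : B ⊆ A) (hv : v ∉ A) :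
    insert v B ∩ A = B ∧ insert v B \ A = {v} := by
  rw [insert_inter_of_notMem hv, inter_eq_left.2 hB, insert_sdiff_of_notMem _ hv,
    sdiff_eq_empty_iff_subset.2 hB]
  exact ⟨rfl, rfl⟩

section Counting

variable [Fintype V] {r : ℕ} {H : Finset (Finset V)}

def crossSets (A : Finset V) (r : ℕ) : Finset (Finset V) :=
  (A.powersetCard (r - 1) ×ˢ (univ \ A)).image fun p => insert p.2 p.1

theorem mem_crossSets {A f : Finset V} :
    f ∈ crossSets A r ↔ #(f ∩ A) = r - 1 ∧ #(f \ A) = 1 := by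
  constructor
  · simp only [crossSets, mem_image, mem_product, mem_powersetCard, mem_sdiff, mem_univ,
      true_and, Prod.exists]
    rintro ⟨B, v, ⟨⟨hBA, hB⟩, hv⟩, rfl⟩
    obtain ⟨hinter, hsdiff⟩ := insert_inter_eq_and_insert_sdiff_eq hBA hv
    simp [hinter, hsdiff, hB]
  · rintro ⟨hinter, hsdiff⟩
    obtain ⟨v, hv⟩ := card_eq_one.1 hsdiff
    have hvf : v ∈ f \ A := hv ▸ mem_singleton_self v
    refine mem_image.2 ⟨(f ∩ A, v), ?_, ?_⟩
    · simp_all [mem_powersetCard, (mem_sdiff.1 hvf).2]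
    · ext x
      have hx := congrArg (x ∈ ·) hv
      simp only [mem_sdiff, mem_singleton, eq_iff_iff] at hx
      simp only [mem_insert, mem_inter]
      tauto

theorem card_crossSets (A : Finset V) (r : ℕ) :
    #(crossSets A r) = (#A).choose (r - 1) * (Fintype.card V - #A) := by
  rw [crossSets, card_image_of_injOn, card_product, card_powersetCard,
    card_sdiff_of_subset (subset_univ A), card_univ]
  rintro ⟨B, v⟩ hp ⟨B', v'⟩ hp' h
  simp only [mem_coe, mem_product, mem_powersetCard, mem_sdiff, mem_univ, true_and] at hp hp'
  have e := insert_inter_eq_and_insert_sdiff_eq hp.1.1 hp.2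
  have e' := insert_inter_eq_and_insert_sdiff_eq hp'.1.1 hp'.2
  simp only at h
  rw [h] at e
  rw [e.1] at e'
  simp_all

theorem card_le_by_card_sdiff (hH : IsUniform r H) (A : Finset V) :
    #H ≤ #(H.filter (· ⊆ A)) + #(crossSets A r ∩ H) + #(H.filter fun f => 2 ≤ #(f \ A)) := by
  refine (card_le_card fun f hf => ?_).trans ((card_union_le _ _).trans
    (Nat.add_le_add_right (card_union_le _ _) _))
  have hsplit := card_inter_add_card_sdiff f A
  rw [hH f hf] at hsplit
  simp only [mem_union, mem_filter, mem_inter, mem_crossSets, hf, true_and, and_true]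
  rcases Nat.lt_or_ge #(f \ A) 2 with h | h
  · interval_cases hfA : #(f \ A)
    · exact .inl (.inl (sdiff_eq_empty_iff_subset.1 (card_eq_zero.1 hfA)))
    · exact .inl (.inr ⟨by omega, rfl⟩)
  · exact .inr h

theorem card_crossSets_inter_le (A : Finset V) :
    #(crossSets A r ∩ H) ≤ (#A).choose (r - 1) * (Fintype.card V - #A) :=
  card_crossSets A r ▸ card_le_card inter_subset_left

def missing (H : Finset (Finset V)) (A B : Finset V) : Finset V :=
  (univ \ A).filter fun v => insert v B ∉ H

theorem card_crossSets_inter_add_card_missing {A B : Finset V} (hB : B ∈ A.powersetCard (r - 1)) :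
    #(crossSets A r ∩ H) + #(missing H A B) ≤ #(crossSets A r) := by
  rw [← card_inter_add_card_sdiff (crossSets A r) H, ← card_image_of_injOn (f := (insert · B))]
  · refine Nat.add_le_add_left (card_le_card fun f hf => ?_) _
    obtain ⟨v, hv, rfl⟩ := mem_image.1 hf
    simp only [missing, mem_filter, mem_sdiff, mem_univ, true_and] at hv
    rw [mem_powersetCard] at hB
    refine mem_sdiff.2 ⟨mem_crossSets.2 ?_, hv.2⟩
    rw [(insert_inter_eq_and_insert_sdiff_eq hB.1 hv.1).1,
      (insert_inter_eq_and_insert_sdiff_eq hB.1 hv.1).2]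
    exact ⟨hB.2, card_singleton v⟩
  · intro v hv w hw h
    simp only [missing, coe_filter, mem_sdiff, mem_univ, true_and] at hv hw
    have := (insert_inter_eq_and_insert_sdiff_eq (mem_powersetCard.1 hB).1 hv.1).2
    rw [show insert v B = insert w B from h,
      (insert_inter_eq_and_insert_sdiff_eq (mem_powersetCard.1 hB).1 hw.1).2] at this
    exact (singleton_injective this).symm

def completeVertices (H : Finset (Finset V)) (A : Finset V) (r : ℕ) : Finset V :=
  (univ \ A).filter fun w => ∀ B ∈ A.powersetCard (r - 1), insert w B ∈ H

theorem sub_le_card_completeVertices {A : Finset V} {K : ℕ}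
    (hK : ∀ B ∈ A.powersetCard (r - 1), #(missing H A B) ≤ K) :
    Fintype.card V - #A - (#A).choose (r - 1) * K ≤ #(completeVertices H A r) := by
  have hsub : univ \ A ⊆ completeVertices H A r ∪ (A.powersetCard (r - 1)).biUnion (missing H A) :=
    fun w hw => by
      by_cases hc : w ∈ completeVertices H A r
      · exact mem_union_left _ hc
      · simp only [completeVertices, mem_filter, hw, true_and, not_forall] at hc
        obtain ⟨B, hB, hwB⟩ := hc
        exact mem_union_right _ (mem_biUnion.2 ⟨B, hB, mem_filter.2 ⟨hw, hwB⟩⟩)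
  have := (card_le_card hsub).trans ((card_union_le _ _).trans (Nat.add_le_add_left
    (card_biUnion_le_card_mul _ _ _ hK) _))
  rw [card_sdiff_of_subset (subset_univ A), card_univ, card_powersetCard] at this
  omega

/-- The `#A` hyperedges `insert (y i) (B i)` with `a i ∈ B i ⊆ A` and complete vertices `y i`
form a Berge matching, which a hyperedge with two vertices outside `A` would extend. -/
theorem card_sdiff_le_one_of_completeVertices {A : Finset V} (hr : 2 ≤ r) (hrA : r - 1 ≤ #A)
    (hB : ¬HasBergeMatching H (#A + 1)) (hC : #A + 2 ≤ #(completeVertices H A r)) : ∀ f ∈ H, #(f \ A) ≤ 1 := by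
  intro f hf
  by_contra! h2
  obtain ⟨u, hu, v, hv, huv⟩ := one_lt_card.1 h2
  rw [mem_sdiff] at hu hv
  obtain ⟨a, ha, haA⟩ := exists_injective_of_card_le_card (α := Fin #A) (C := A) (by simp)
  obtain ⟨y, hy, hyC⟩ := exists_injective_of_card_le_card (α := Fin #A)
    (C := ((completeVertices H A r).erase u).erase v) (by
      have := pred_card_le_card_erase (s := completeVertices H A r) (a := u)
      have := pred_card_le_card_erase (s := (completeVertices H A r).erase u) (a := v)
      simp only [Fintype.card_fin]; omega)
  simp only [completeVertices, mem_erase, mem_filter, mem_sdiff, mem_univ, true_and] at hyC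
  have hBex : ∀ i, ∃ B ∈ A.powersetCard (r - 1), a i ∈ B := fun i => by
    obtain ⟨B, hiB, hBA, hB⟩ := exists_subsuperset_card_eq (singleton_subset_iff.2 (haA i))
      (by simp only [card_singleton]; omega) hrA
    exact ⟨B, mem_powersetCard.2 ⟨hBA, hB⟩, hiB (mem_singleton_self _)⟩
  choose B hBA haB using hBex
  have hout : ∀ i, insert (y i) (B i) \ A = {y i} := fun i =>
    (insert_inter_eq_and_insert_sdiff_eq (mem_powersetCard.1 (hBA i)).1 (hyC i).2.2.1).2
  have hM : IsBergeMatching H a y fun i => insert (y i) (B i) :=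
    ⟨Sum.elim_injective.2 ⟨ha, hy, fun i j h => (hyC j).2.2.1 (h ▸ haA i)⟩,
      fun i j h => hy (singleton_injective (by rw [← hout, ← hout]; exact congrArg (· \ A) h)),
      fun i => (hyC i).2.2.2 _ (hBA i), fun i => mem_insert_of_mem (haB i),
      fun i => mem_insert_self _ _⟩
  refine hB ⟨_, _, _, hM.cons hf ?_ hu.1 hv.1 huv ?_ ?_⟩
  · rintro ⟨i, rfl⟩
    simp [hout] at h2
  · rintro ⟨i | i, hi⟩ <;> simp only [Sum.elim_inl, Sum.elim_inr] at hi
    exacts [hu.2 (hi ▸ haA i), (hyC i).2.1 hi]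
  · rintro ⟨i | i, hi⟩ <;> simp only [Sum.elim_inl, Sum.elim_inr] at hi
    exacts [hv.2 (hi ▸ haA i), (hyC i).1 hi]

end Counting

section Pullback

variable {W : Type*} [Fintype W] {r : ℕ} {H : Finset (Finset V)}

def pullback (ι : W ↪ V) (H : Finset (Finset V)) : Finset (Finset W) :=
  univ.filter fun e => e.map ι ∈ H

@[simp]
theorem mem_pullback {ι : W ↪ V} {e : Finset W} : e ∈ pullback ι H ↔ e.map ι ∈ H := by
  simp [pullback]

theorem isUniform_pullback (hH : IsUniform r H) (ι : W ↪ V) : IsUniform r (pullback ι H) :=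
  fun _ he => (card_map ι).symm.trans (hH _ (mem_pullback.1 he))

theorem card_filter_subset_map_le (ι : W ↪ V) (H : Finset (Finset V)) :
    #(H.filter (· ⊆ univ.map ι)) ≤ #(pullback ι H) := by
  refine (card_le_card fun f hf => ?_).trans (card_image_le (f := (·.map ι)))
  rw [mem_filter] at hf
  obtain ⟨e, -, rfl⟩ := subset_map_iff.1 hf.2
  exact mem_image_of_mem _ (mem_pullback.2 hf.1)

/-- `H` is `D(F)`-free. -/
def DeletionFree {α : Type*} [Fintype α] [DecidableEq α] (F : Finset (Finset α))
    (H : Finset (Finset V)) : Prop :=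
  ∀ S : Finset α, StronglyIndep F S → ¬ContainsCopy (univ \ S) (F.filter fun e => Disjoint e S) H

variable [DecidableEq W] {α : Type*} [Fintype α] [DecidableEq α] {F : Finset (Finset α)}

/-- A copy of `F` minus `S` inside the image of `ι` extends to a copy of `F` by sending the
vertices of `S` to distinct complete vertices. -/
theorem deletionFree_pullback [Fintype V] (hF : IsUniform r F) (hH : ¬ContainsCopy univ F H)
    (ι : W ↪ V) (hC : Fintype.card α ≤ #(completeVertices H (univ.map ι) r)) :
    DeletionFree F (pullback ι H) := by
  rintro S hS ⟨g, hg, hmap⟩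
  obtain ⟨y, hy, hyC⟩ := exists_injective_of_card_le_card hC
  simp only [completeVertices, mem_filter, mem_sdiff, mem_univ, true_and] at hyC
  let G x := if x ∈ S then y x else ι (g x)
  have hG : ∀ e', Disjoint e' S → e'.image G = (e'.image g).map ι := fun e' he' => by
    rw [map_eq_image, image_image]
    exact image_congr fun x hx => if_neg (disjoint_left.1 he' hx)
  refine hH ⟨G, fun a _ b _ h => ?_, fun e he => ?_⟩
  · by_cases ha : a ∈ S <;> by_cases hb : b ∈ S <;> simp only [G, ha, hb, if_true, if_false] at h
    · exact hy h
    · exact absurd (h ▸ mem_map_of_mem ι (mem_univ (g b))) (hyC a).1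
    · exact absurd (h ▸ mem_map_of_mem ι (mem_univ (g a))) (hyC b).1
    · exact hg (by simpa using ha) (by simpa using hb) (ι.injective h)
  rcases Nat.le_one_iff_eq_zero_or_eq_one.1 (hS e he) with h0 | h1
  · have hdisj : Disjoint e S := disjoint_iff_inter_eq_empty.2 (card_eq_zero.1 h0)
    exact hG e hdisj ▸ mem_pullback.1 (hmap e (mem_filter.2 ⟨he, hdisj⟩))
  obtain ⟨x, hx⟩ := card_eq_one.1 h1
  obtain ⟨hxe, hxS⟩ := mem_inter.1 (hx ▸ mem_singleton_self x)
  have hdisj : Disjoint (e.erase x) S := disjoint_left.2 fun z hz hzS => (mem_erase.1 hz).1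
    (mem_singleton.1 (hx ▸ mem_inter.2 ⟨(mem_erase.1 hz).2, hzS⟩))
  have hinj : Set.InjOn g (e.erase x) := fun a ha b hb => hg
    (by simpa using disjoint_left.1 hdisj ha) (by simpa using disjoint_left.1 hdisj hb)
  rw [← insert_erase hxe, image_insert, hG _ hdisj, show G x = y x from if_pos hxS]
  refine (hyC x).2 _ (mem_powersetCard.2 ⟨map_subset_map.2 (subset_univ _), ?_⟩)
  rw [card_map, card_image_of_injOn hinj, card_erase_of_mem hxe, hF e he]

/-- A copy of `F` leaves at most one vertex of each hyperedge outside the image of `ι`, so the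
vertices it sends outside form a strongly independent set. -/
theorem not_containsCopy_of_deletionFree_pullback [Nonempty W] {ι : W ↪ V}
    (hH : ∀ f ∈ H, #(f \ univ.map ι) ≤ 1) (hfree : DeletionFree F (pullback ι H)) :
    ¬ContainsCopy univ F H := by
  rintro ⟨g, hg, hmap⟩
  have hginj : Function.Injective g := fun a b h => hg (by simp) (by simp) h
  set S := univ.filter fun x => g x ∉ univ.map ι
  have hι : ∀ x ∉ S, ι (Function.invFun ι (g x)) = g x := fun x hx =>
    Function.invFun_eq (by simpa [S] using hx)
  refine hfree S (fun e he => ?_) ⟨Function.invFun ι ∘ g, fun a ha b hb h => ?_, fun e he => ?_⟩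
  · calc #(e ∩ S) = #((e ∩ S).image g) := (card_image_of_injective _ hginj).symm
      _ ≤ #(e.image g \ univ.map ι) := card_le_card fun v hv => by
          obtain ⟨x, hx, rfl⟩ := mem_image.1 hv
          simp only [mem_inter, S, mem_filter] at hx
          exact mem_sdiff.2 ⟨mem_image_of_mem g hx.1, hx.2.2⟩
      _ ≤ 1 := hH _ (hmap e he)
  · simp only [coe_sdiff, coe_univ, Set.mem_sdiff, Set.mem_univ, true_and, mem_coe] at ha hb
    exact hginj (by rw [← hι a ha, ← hι b hb]; exact congrArg ι h)
  · rw [mem_filter] at he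
    rw [mem_pullback, map_eq_image, image_image]
    convert hmap e he.1 using 1
    exact image_congr fun x hx => hι x (disjoint_left.1 he.2 hx)

theorem exists_free_of_deletionFree [Fintype V] [Nonempty W] (ι : W ↪ V) (hr : 1 ≤ r)
    {H₀ : Finset (Finset W)} (hH₀ : IsUniform r H₀) (hfree : DeletionFree F H₀) :
    ∃ H : Finset (Finset V), IsUniform r H ∧
      (¬HasBergeMatching H (Fintype.card W + 1) ∧ ¬ContainsCopy univ F H) ∧
      #H = #H₀ + (Fintype.card W).choose (r - 1) * (Fintype.card V - Fintype.card W) := by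
  set A := univ.map ι
  have hA : #A = Fintype.card W := by simp [A]
  have hmapA : ∀ e : Finset W, e.map ι ⊆ A := fun e => map_subset_map.2 (subset_univ e)
  have hcross : ∀ f ∈ crossSets A r, ¬f ⊆ A := fun f hf hfA => by
    simp [mem_crossSets, sdiff_eq_empty_iff_subset.2 hfA] at hf
  set H := H₀.image (·.map ι) ∪ crossSets A r
  have hout : ∀ f ∈ H, #(f \ A) ≤ 1 := fun f hf => by
    rcases mem_union.1 hf with hf | hf
    · obtain ⟨e, -, rfl⟩ := mem_image.1 hf
      simp [sdiff_eq_empty_iff_subset.2 (hmapA e)]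
    · exact (mem_crossSets.1 hf).2.le
  have hpullback : pullback ι H = H₀ := by
    ext e
    simp only [mem_pullback, H, mem_union, mem_image, map_inj, exists_eq_right,
      or_iff_left (hcross _ · (hmapA e))]
  refine ⟨H, fun f hf => ?_, ⟨fun hB => ?_, not_containsCopy_of_deletionFree_pullback hout
    (hpullback ▸ hfree)⟩, ?_⟩
  · rcases mem_union.1 hf with hf | hf
    · obtain ⟨e, he, rfl⟩ := mem_image.1 hf
      rw [card_map, hH₀ e he]
    · rw [← card_inter_add_card_sdiff f A, (mem_crossSets.1 hf).1, (mem_crossSets.1 hf).2]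
      omega
  · have := hB.le_card hout
    omega
  · rw [card_union_of_disjoint (disjoint_left.2 fun f hf hf' => ?_), card_crossSets, hA,
      card_image_of_injective _ (map_injective ι)]
    obtain ⟨e, -, rfl⟩ := mem_image.1 hf
    exact hcross _ hf' (hmapA e)

end Pullback

theorem deletionFree_empty {α : Type*} [Fintype α] [DecidableEq α] {F : Finset (Finset α)}
    (h : ¬HasStrongColoring F) : DeletionFree F (∅ : Finset (Finset V)) := by
  rintro S hS ⟨g, -, hmap⟩
  refine h ⟨S, fun e he => le_antisymm (hS e he) (one_le_card.2 ?_)⟩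
  by_contra hdisj
  exact notMem_empty _ (hmap e (mem_filter.2 ⟨he, disjoint_iff_inter_eq_empty.2
    (not_nonempty_iff_eq_empty.1 hdisj)⟩))

theorem hasProperColoring_two_of_hasStrongColoring {r : ℕ} {F : Finset (Finset V)}
    (h : HasStrongColoring F) (hF : IsUniform r F) (hr : 2 ≤ r) : HasProperColoring 2 F := by
  obtain ⟨red, hred⟩ := h
  refine ⟨fun v => if v ∈ red then 0 else 1, fun e he => ?_⟩
  obtain ⟨u, hu⟩ := card_eq_one.1 (hred e he)
  obtain ⟨hue, hur⟩ := mem_inter.1 (hu ▸ mem_singleton_self u)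
  obtain ⟨w, hwe, hwu⟩ := exists_mem_ne (hr.trans_eq (hF e he).symm) u
  have hwr : w ∉ red := fun hwr => hwu (mem_singleton.1 (hu ▸ mem_inter.2 ⟨hwe, hwr⟩))
  exact ⟨u, hue, w, hwe, by simp [hur, hwr]⟩

section Extremal

variable {n r : ℕ} {Free : Finset (Finset (Fin n)) → Prop}

theorem bddAbove_card_of_free :
    BddAbove {m | ∃ H : Finset (Finset (Fin n)), IsUniform r H ∧ Free H ∧ #H = m} :=
  ⟨Fintype.card (Finset (Fin n)), by rintro _ ⟨H, -, -, rfl⟩; exact card_le_univ H⟩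

theorem le_exr {H : Finset (Finset (Fin n))} (hH : IsUniform r H) (hFree : Free H) :
    #H ≤ exr n r Free :=
  le_csSup bddAbove_card_of_free ⟨H, hH, hFree, rfl⟩

theorem exr_le {a : ℕ} (hne : ∃ H, IsUniform r H ∧ Free H)
    (h : ∀ H, IsUniform r H → Free H → #H ≤ a) : exr n r Free ≤ a := by
  obtain ⟨H, hH, hFree⟩ := hne
  exact csSup_le ⟨_, H, hH, hFree, rfl⟩ fun _ ⟨H, hH, hFree, hm⟩ => hm ▸ h H hH hFree

theorem exists_card_eq_exr (hne : ∃ H, IsUniform r H ∧ Free H) :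
    ∃ H, IsUniform r H ∧ Free H ∧ #H = exr n r Free := by
  obtain ⟨H, hH, hFree⟩ := hne
  exact Nat.sSup_mem (s := {m | ∃ H : Finset (Finset (Fin n)), IsUniform r H ∧ Free H ∧ #H = m})
    ⟨_, H, hH, hFree, rfl⟩ bddAbove_card_of_free

end Extremal

theorem choose_sub_one_add_one_le {s k : ℕ} (hk : 1 ≤ k) (hks : k ≤ s) :
    (s - 1).choose k + 1 ≤ s.choose k := by
  obtain ⟨s, rfl⟩ : ∃ s', s = s' + 1 := ⟨s - 1, by omega⟩
  obtain ⟨k, rfl⟩ : ∃ k', k = k' + 1 := ⟨k - 1, by omega⟩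
  have := Nat.choose_pos (n := s) (k := k) (by omega)
  rw [Nat.add_sub_cancel, Nat.choose_succ_succ']
  omega

def degreeBound (s r : ℕ) : ℕ := s + 1 + (2 * (s + 1)).choose (r - 1)

/-- Bounds the hyperedges lying inside a set of `s` vertices plus those having two vertices
outside it, when there are no `s + 1` vertices of degree above `degreeBound s r`. -/
def excessBound (s r : ℕ) : ℕ := s.choose r + (s + 2 * s * degreeBound s r)

def bergeThreshold (s r m : ℕ) : ℕ :=
  s + (s * (s - 1).choose (r - 1) + excessBound s r) +
    (s.choose (r - 1) * excessBound s r + s + 2 + m)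

theorem card_le_exr_add_of_completeVertices {s r m n : ℕ} (hr : 2 ≤ r) (hrs : r ≤ s + 1)
    {F : Finset (Finset (Fin m))} (hF : IsUniform r F) {H : Finset (Finset (Fin n))}
    (hH : IsUniform r H) (hB : ¬HasBergeMatching H (s + 1)) (hFree : ¬ContainsCopy univ F H)
    {A : Finset (Fin n)} (hA : #A = s) (hC : s + 2 + m ≤ #(completeVertices H A r)) :
    #H ≤ exr s r (DeletionFree F) + s.choose (r - 1) * (n - s) := by
  have hflat := card_sdiff_le_one_of_completeVertices hr (by omega) (hA ▸ hB) (by omega)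
  set ι := (A.orderEmbOfFin hA).toEmbedding
  have hAι : univ.map ι = A := map_orderEmbOfFin_univ A hA
  have hfree := deletionFree_pullback hF hFree ι (by rw [hAι, Fintype.card_fin]; omega)
  have hin := (card_filter_subset_map_le ι H).trans (le_exr (isUniform_pullback hH ι) hfree)
  have hbad : H.filter (fun f => 2 ≤ #(f \ A)) = ∅ :=
    filter_eq_empty_iff.2 fun f hf => by have := hflat f hf; omega
  have hcross := card_crossSets_inter_le (H := H) (r := r) A
  have hsplit := card_le_by_card_sdiff hH A
  rw [hAι] at hin
  rw [hbad, card_empty, add_zero] at hsplit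
  rw [Fintype.card_fin, hA] at hcross
  omega

theorem card_le_of_free {s r m n : ℕ} (hr : 2 ≤ r) (hrs : r ≤ s + 1)
    {F : Finset (Finset (Fin m))} (hF : IsUniform r F) (hn : bergeThreshold s r m ≤ n)
    {H : Finset (Finset (Fin n))} (hH : IsUniform r H) (hB : ¬HasBergeMatching H (s + 1))
    (hFree : ¬ContainsCopy univ F H) :
    #H ≤ exr s r (DeletionFree F) + s.choose (r - 1) * (n - s) := by
  set A := univ.filter fun v => degreeBound s r < degree H v
  have hA : #A ≤ s := card_le_of_lt_degree hH hB fun v hv => (mem_filter.1 hv).2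
  have hbad := card_filter_two_le_card_sdiff_le hB A fun v hv => by simpa [A] using hv
  have hsplit := card_le_by_card_sdiff hH A
  have hin := (card_filter_subset_le hH A).trans (Nat.choose_le_choose r hA)
  have hcross := card_crossSets_inter_le (H := H) (r := r) A
  rw [Fintype.card_fin] at hcross
  unfold bergeThreshold at hn
  rcases hA.lt_or_eq with hlt | heq
  · have hq := choose_sub_one_add_one_le (s := s) (k := r - 1) (by omega) (by omega)
    have hcross' : (#A).choose (r - 1) * (n - #A) ≤ (s - 1).choose (r - 1) * (n - s) +
        s * (s - 1).choose (r - 1) := by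
      rw [mul_comm s, ← mul_add]
      exact Nat.mul_le_mul (Nat.choose_le_choose _ (by omega)) (by omega)
    have := Nat.mul_le_mul_right (n - s) hq
    rw [add_mul, one_mul] at this
    unfold excessBound at *
    omega
  by_cases hK : ∀ B ∈ A.powersetCard (r - 1), #(missing H A B) ≤ excessBound s r
  · have hC := sub_le_card_completeVertices hK
    rw [Fintype.card_fin, heq] at hC
    exact card_le_exr_add_of_completeVertices hr hrs hF hH hB hFree heq (by omega)
  · push Not at hK
    obtain ⟨B, hB, hmissing⟩ := hK
    have := card_crossSets_inter_add_card_missing (H := H) hB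
    rw [card_crossSets, Fintype.card_fin, heq] at this
    unfold excessBound at *
    omega

end BergeTuran

open BergeTuran

theorem exr_berge_matching_and_hypergraph_general
    (s r m : ℕ) (hr : 2 ≤ r) (hrs : r ≤ s + 1)
    (F : Finset (Finset (Fin m))) (hF : IsUniform r F)
    (hχ : ¬ HasProperColoring 2 F ∨
      ((HasProperColoring 2 F ∧ ¬ HasProperColoring 1 F) ∧ ¬ HasStrongColoring F)) :
    ∃ n₀ : ℕ, ∀ n : ℕ, n₀ ≤ n →
      exr n r (fun H => ¬ ContainsBerge (matchingHG (s + 1)) H ∧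
          ¬ ContainsCopy Finset.univ F H) =
        exr s r (fun H => ∀ S : Finset (Fin m), StronglyIndep F S →
          ¬ ContainsCopy (Finset.univ \ S) (F.filter fun e => Disjoint e S) H) +
          Nat.choose s (r - 1) * (n - s) := by
  have hNS : ¬HasStrongColoring F := by
    rcases hχ with h | h
    exacts [fun hc => h (hasProperColoring_two_of_hasStrongColoring hc hF hr), h.2]
  obtain ⟨H₀, hH₀, hfree₀, hcard₀⟩ := exists_card_eq_exr (n := s) (r := r)
    ⟨∅, fun _ h => absurd h (notMem_empty _), deletionFree_empty hNS⟩
  refine ⟨bergeThreshold s r m, fun n hn => ?_⟩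
  have : Nonempty (Fin s) := ⟨⟨0, by omega⟩⟩
  obtain ⟨H, hH, ⟨hB, hFree⟩, hcard⟩ := exists_free_of_deletionFree
    (Fin.castLEEmb (show s ≤ n by unfold bergeThreshold at hn; omega)) (by omega) hH₀ hfree₀
  simp only [Fintype.card_fin] at hB hcard
  refine le_antisymm (exr_le ⟨H, hH, containsBerge_matchingHG_iff.not.2 hB, hFree⟩ ?_)
    (hcard₀ ▸ hcard ▸ le_exr hH ⟨containsBerge_matchingHG_iff.not.2 hB, hFree⟩)
  exact fun H hH hfree =>
    card_le_of_free hr hrs hF hn hH (containsBerge_matchingHG_iff.not.1 hfree.1) hfree.2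

/-- Theorem: for `1 ≤ s`, `2 ≤ r ≤ s+1` and an `r`-graph `F` with `χ(F) > 2`, or
`χ(F) = 2` and `q(F) = ∞`, for all sufficiently large `n`,
`ex_r(n, BM_{s+1} ∪ {F}) = ex_r(s, D(F)) + C(s, r-1)(n-s)`,
where `D(F)` consists of the `r`-graphs obtained from `F` by deleting a
(possibly empty) strongly independent set. -/
theorem exr_berge_matching_and_hypergraph
    (s r m : ℕ) (hs : 1 ≤ s) (hr : 2 ≤ r) (hrs : r ≤ s + 1)
    (F : Finset (Finset (Fin m))) (hF : IsUniform r F)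
    (hχ : ¬ HasProperColoring 2 F ∨
      ((HasProperColoring 2 F ∧ ¬ HasProperColoring 1 F) ∧ ¬ HasStrongColoring F)) :
    ∃ n₀ : ℕ, ∀ n : ℕ, n₀ ≤ n →
      exr n r (fun H => ¬ ContainsBerge (matchingHG (s + 1)) H ∧
          ¬ ContainsCopy Finset.univ F H) =
        exr s r (fun H => ∀ S : Finset (Fin m), StronglyIndep F S →
          ¬ ContainsCopy (Finset.univ \ S) (F.filter fun e => Disjoint e S) H) +
          Nat.choose s (r - 1) * (n - s) :=
  exr_berge_matching_and_hypergraph_general s r m hr hrs F hF hχ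
end

section
/- Let s ≥ 1, r, and k be integers with 2 ≤ r ≤ s+1 and k ≥ r+1, and let K_k^{(r)} denote the complete r-graph on k vertices. Then there exists n₀ such that for all n ≥ n₀, ex_r(n, BM_{s+1} ∪ {K_k^{(r)}}) = ex_r(s, {K_{k−1}^{(r)}}) + C(s, r−1)·(n−s). -/
/-!
Lower bound: place an extremal `K_{k-1}^{(r)}`-free `r`-graph on a set `S` of `s` vertices and
add every `r`-set with exactly one vertex outside `S`. Each edge of a Berge matching then
contributes a distinct vertex of `S`, so Berge matchings have at most `s` edges, and a
`K_k^{(r)}` would have `k - 1` vertices inside `S`.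

Upper bound: let `D` be the set of vertices of degree larger than `C(3s+1, r-1) + s`. A greedy
construction of a Berge `M_{s+1}` shows that `|D| ≤ s` and that only boundedly many edges have
two vertices outside `D`. If `|D| < s`, the remaining edges number at most
`C(s, r) + n C(s-1, r-1)`, and `C(s-1, r-1) < C(s, r-1)` makes this smaller for large `n`.
If `|D| = s`, the greedy construction shows that no edge has two vertices outside `D`. Then
either `D` spans a `K_{k-1}^{(r)}`, and `K_k^{(r)}`-freeness removes at least one edge through
each outside vertex, or the edges inside `D` form a `K_{k-1}^{(r)}`-free `r`-graph on `s`
vertices.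
-/

open Finset

variable {V : Type*} [DecidableEq V]

theorem mem_matchingHG {t : ℕ} {e : Finset (Fin t × Fin 2)} :
    e ∈ matchingHG t ↔ ∃ i : Fin t, e = {(i, 0), (i, 1)} := by
  simp [matchingHG, eq_comm]

theorem containsBerge_matchingHG_of_pairs {t : ℕ} {H : Finset (Finset V)}
    (E : Fin t → Finset V) (a b : Fin t → V) (hE : Function.Injective E)
    (ha : Function.Injective a) (hb : Function.Injective b) (hab : ∀ i j, a i ≠ b j)
    (hEH : ∀ i, E i ∈ H) (haE : ∀ i, a i ∈ E i) (hbE : ∀ i, b i ∈ E i) :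
    ContainsBerge (matchingHG t) H := by
  have hφ : ∀ i : Fin t,
      (univ.filter (fun j => (j, 0) ∈ ({(i, 0), (i, 1)} : Finset (Fin t × Fin 2)))).sup E
        = E i := by
    intro i
    rw [show univ.filter (fun j => (j, 0) ∈ ({(i, 0), (i, 1)} : Finset (Fin t × Fin 2))) = {i}
      by ext; simp, sup_singleton]
  refine ⟨fun z => if z.2 = 0 then a z.1 else b z.1,
    fun S => (univ.filter (fun j => (j, 0) ∈ S)).sup E, ?_, ?_, ?_, ?_⟩
  · rintro ⟨i, c⟩ ⟨j, c'⟩ h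
    fin_cases c <;> fin_cases c' <;> simp_all [ha.eq_iff, hb.eq_iff, (hab _ _).symm]
  · rintro _ hS _ hS' h
    obtain ⟨i, rfl⟩ := mem_matchingHG.1 hS
    obtain ⟨j, rfl⟩ := mem_matchingHG.1 hS'
    simp only [hφ] at h
    rw [hE h]
  · intro S hS
    obtain ⟨i, rfl⟩ := mem_matchingHG.1 hS
    simpa only [hφ] using hEH i
  · intro S hS
    obtain ⟨i, rfl⟩ := mem_matchingHG.1 hS
    simp [insert_subset_iff, haE, hbE]

theorem containsBerge_matchingHG_of_greedy {t : ℕ} {H : Finset (Finset V)}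
    (R : ℕ → Finset V) (hR : Antitone R)
    (hstep : ∀ i < t, ∀ (U : Finset V) (ℰ : Finset (Finset V)),
      #U ≤ 2 * i → #ℰ ≤ i → Disjoint U (R i) →
      ∃ e ∈ H, e ∉ ℰ ∧
        ∃ x ∈ e, ∃ y ∈ e, x ≠ y ∧ x ∉ U ∪ R (i + 1) ∧ y ∉ U ∪ R (i + 1)) :
    ContainsBerge (matchingHG t) H := by
  suffices ∀ m ≤ t, ∃ (E : Fin m → Finset V) (a b : Fin m → V),
      Function.Injective E ∧ Function.Injective a ∧ Function.Injective b ∧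
      (∀ i j, a i ≠ b j) ∧ (∀ i, E i ∈ H ∧ a i ∈ E i ∧ b i ∈ E i) ∧
      ∀ i, a i ∉ R m ∧ b i ∉ R m by
    obtain ⟨E, a, b, hE, ha, hb, hab, hmem, -⟩ := this t le_rfl
    exact containsBerge_matchingHG_of_pairs E a b hE ha hb hab (fun i => (hmem i).1)
      (fun i => (hmem i).2.1) (fun i => (hmem i).2.2)
  intro m hm
  induction m with
  | zero => exact ⟨Fin.elim0, Fin.elim0, Fin.elim0, fun i => i.elim0, fun i => i.elim0,
      fun i => i.elim0, fun i => i.elim0, fun i => i.elim0, fun i => i.elim0⟩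
  | succ m ih =>
    obtain ⟨E, a, b, hE, ha, hb, hab, hmem, hR'⟩ := ih (by omega)
    have hU : #(univ.image a ∪ univ.image b) ≤ 2 * m := by
      grw [card_union_le, card_image_le, card_image_le, card_univ, Fintype.card_fin]; omega
    have hdisj : Disjoint (univ.image a ∪ univ.image b) (R m) := by
      simp only [disjoint_left, mem_union, mem_image, mem_univ, true_and]
      rintro _ (⟨i, rfl⟩ | ⟨i, rfl⟩)
      exacts [(hR' i).1, (hR' i).2]
    obtain ⟨e, he, heE, x, hx, y, hy, hxy, hxU, hyU⟩ :=
      hstep m (by omega) _ (univ.image E) hU (card_image_le.trans (by simp)) hdisj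
    simp only [mem_union, mem_image, mem_univ, true_and, not_or, not_exists] at hxU hyU heE
    obtain ⟨⟨hxa, hxb⟩, hxR⟩ := hxU
    obtain ⟨⟨hya, hyb⟩, hyR⟩ := hyU
    have hR'' : ∀ i, a i ∉ R (m + 1) ∧ b i ∉ R (m + 1) := fun i =>
      ⟨fun h => (hR' i).1 (hR m.le_succ h), fun h => (hR' i).2 (hR m.le_succ h)⟩
    refine ⟨Fin.cons e E, Fin.cons x a, Fin.cons y b, ?_, ?_, ?_, ?_, ?_, ?_⟩
    · exact Fin.cons_injective_iff.2 ⟨by simpa using heE, hE⟩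
    · exact Fin.cons_injective_iff.2 ⟨by simpa using hxa, ha⟩
    · exact Fin.cons_injective_iff.2 ⟨by simpa using hyb, hb⟩
    · simp [Fin.forall_fin_succ, hxy, hab, fun i => Ne.symm (hxb i), hya]
    · simp [Fin.forall_fin_succ, he, hx, hy, hmem]
    · simp [Fin.forall_fin_succ, hxR, hyR, hR'']

theorem containsBerge_matchingHG_of_designated {t : ℕ} {H : Finset (Finset V)}
    (v : Fin t → V) (hv : Function.Injective v)
    (hstep : ∀ (i : Fin t) (U : Finset V) (ℰ : Finset (Finset V)),
      univ.image v ⊆ U → #U ≤ t + 2 * i → #ℰ ≤ i →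
        ∃ e ∈ H, e ∉ ℰ ∧ v i ∈ e ∧ ¬ e ⊆ U) :
    ContainsBerge (matchingHG t) H := by
  -- `R i` reserves the designated vertices of the steps still to come
  refine containsBerge_matchingHG_of_greedy (fun i => (univ.filter (i ≤ ·.val)).image v)
    (fun i j hij => image_subset_image fun z hz => by
      simp only [mem_filter, mem_univ, true_and] at hz ⊢
      omega) ?_
  intro i hi U ℰ hU hℰ hdisj
  obtain ⟨e, he, heℰ, hve, hsub⟩ :=
    hstep ⟨i, hi⟩ (U ∪ univ.image v) ℰ subset_union_right
    (by grw [card_union_le, card_image_le, card_univ, Fintype.card_fin]; simp; omega) hℰ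
  obtain ⟨y, hye, hyU⟩ := not_subset.1 hsub
  have hvi : v ⟨i, hi⟩ ∉ U :=
    disjoint_right.1 hdisj (by simpa using ⟨⟨i, hi⟩, le_rfl, rfl⟩)
  refine ⟨e, he, heℰ, v ⟨i, hi⟩, hve, y, hye, ?_, ?_, ?_⟩
  · rintro rfl
    simp at hyU
  · simp only [mem_union, hvi, mem_image, mem_filter, hv.eq_iff, false_or]
    rintro ⟨j, hj, rfl⟩
    simp at hj
  · simp only [mem_union, not_or, mem_image] at hyU ⊢
    exact ⟨hyU.1, fun ⟨j, _, hj⟩ => hyU.2 ⟨j, mem_univ j, hj⟩⟩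

theorem not_containsBerge_matchingHG_of_card_sdiff_le_one {s : ℕ} {H : Finset (Finset V)}
    {S : Finset V} (hS : #S ≤ s) (hH : ∀ e ∈ H, #(e \ S) ≤ 1) :
    ¬ ContainsBerge (matchingHG (s + 1)) H := by
  rintro ⟨g, φ, hg, -, hφH, hφ⟩
  have hpair : ∀ i : Fin (s + 1), ∃ c, g (i, c) ∈ S := by
    intro i
    by_contra! h
    have hi : {(i, 0), (i, 1)} ∈ matchingHG (s + 1) := mem_matchingHG.2 ⟨i, rfl⟩
    have h2 : ({g (i, 0), g (i, 1)} : Finset V) ⊆ φ {(i, 0), (i, 1)} \ S := by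
      simpa [insert_subset_iff, h] using hφ _ hi
    have := (card_le_card h2).trans (hH _ (hφH _ hi))
    rw [card_pair (hg.ne (by simp))] at this
    omega
  choose c hc using hpair
  obtain ⟨i, -, j, -, hij, heq⟩ := exists_ne_map_eq_of_card_lt_of_maps_to
    (s := univ) (t := S) (by simp; omega) (fun i _ => hc i)
  exact hij (congrArg Prod.fst (hg heq))

def degree (H : Finset (Finset V)) (v : V) : ℕ :=
  #(H.filter (v ∈ ·))

theorem exists_mem_notMem_not_subset_of_lt_degree {r N L : ℕ} {H : Finset (Finset V)}
    (hH : IsUniform r H) {v : V} {U : Finset V} {ℰ : Finset (Finset V)}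
    (hU : #U ≤ N) (hℰ : #ℰ ≤ L) (hv : N.choose (r - 1) + L < degree H v) :
    ∃ e ∈ H, e ∉ ℰ ∧ v ∈ e ∧ ¬ e ⊆ U := by
  have hinside : #((H.filter (v ∈ ·)).filter (· ⊆ U)) ≤ N.choose (r - 1) := by
    grw [← Nat.choose_le_choose _ hU, ← card_powersetCard]
    refine card_le_card_of_injOn (·.erase v) (fun e he => ?_) (fun e he e' he' h => ?_)
    · rw [mem_coe, mem_filter, mem_filter] at he
      simp [mem_powersetCard, (erase_subset _ _).trans he.2, hH e he.1.1, he.1.2]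
    · rw [mem_coe, mem_filter, mem_filter] at he he'
      rw [← insert_erase he.1.2, ← insert_erase he'.1.2]
      exact congrArg (insert v) h
  have hsplit := card_filter_add_card_filter_not (s := H.filter (v ∈ ·)) (· ⊆ U)
  obtain ⟨e, he, heℰ⟩ := exists_mem_notMem_of_card_lt_card
    (s := ℰ) (t := (H.filter (v ∈ ·)).filter (¬ · ⊆ U)) (by unfold degree at hv; omega)
  simp only [mem_filter] at he
  exact ⟨e, he.1.1, heℰ, he.1.2, he.2⟩

theorem card_filter_not_disjoint_le_sum_degree (H : Finset (Finset V)) (U : Finset V) :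
    #(H.filter (¬ Disjoint U ·)) ≤ ∑ x ∈ U, degree H x := by
  refine (card_le_card fun e he => ?_).trans card_biUnion_le
  obtain ⟨heH, hUe⟩ := mem_filter.1 he
  obtain ⟨x, hxU, hxe⟩ := not_disjoint_iff.1 hUe
  exact mem_biUnion.2 ⟨x, hxU, mem_filter.2 ⟨heH, hxe⟩⟩

theorem card_filter_two_le_card_sdiff_le {s d : ℕ} {H : Finset (Finset V)} {D : Finset V}
    (hD : ∀ x ∉ D, degree H x ≤ d) (hB : ¬ ContainsBerge (matchingHG (s + 1)) H) :
    #(H.filter fun e => 2 ≤ #(e \ D)) ≤ s * (2 * d + 1) := by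
  by_contra! h
  refine hB (containsBerge_matchingHG_of_greedy (fun _ => D) antitone_const ?_)
  intro i hi U ℰ hU hℰ hUD
  have hbad : #(ℰ ∪ H.filter (¬ Disjoint U ·)) ≤ s * (2 * d + 1) := by
    grw [card_union_le, card_filter_not_disjoint_le_sum_degree,
      sum_le_card_nsmul U _ d fun x hx => hD x (disjoint_left.1 hUD hx), smul_eq_mul]
    nlinarith
  obtain ⟨e, he, hebad⟩ := exists_mem_notMem_of_card_lt_card (hbad.trans_lt h)
  simp only [mem_union, mem_filter, not_or, not_and, not_not] at hebad he
  obtain ⟨x, hx, y, hy, hxy⟩ := one_lt_card.1 he.2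
  rw [mem_sdiff] at hx hy
  refine ⟨e, he.1, hebad.1, x, hx.1, y, hy.1, hxy, ?_, ?_⟩ <;>
    simp only [mem_union, not_or]
  exacts [⟨disjoint_right.1 (hebad.2 he.1) hx.1, hx.2⟩,
    ⟨disjoint_right.1 (hebad.2 he.1) hy.1, hy.2⟩]

theorem card_filter_lt_degree_le [Fintype V] {s r : ℕ} {H : Finset (Finset V)}
    (hH : IsUniform r H)
    (hB : ¬ ContainsBerge (matchingHG (s + 1)) H) :
    #(univ.filter fun v => (3 * s + 1).choose (r - 1) + s < degree H v) ≤ s := by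
  by_contra! h
  obtain ⟨X, hX, hXcard⟩ := exists_subset_card_eq h
  obtain ⟨f, hf⟩ := Function.Embedding.exists_of_card_eq_finset (α := Fin (s + 1))
    (by simpa using hXcard.symm)
  refine hB (containsBerge_matchingHG_of_designated f f.injective fun i U ℰ _ hU hℰ => ?_)
  have hfi : f i ∈ X := hf ▸ mem_map_of_mem f (mem_univ i)
  exact exists_mem_notMem_not_subset_of_lt_degree hH (hU.trans (by omega))
    (hℰ.trans (by omega)) (mem_filter.1 (hX hfi)).2

theorem card_sdiff_le_one_of_lt_degree {s r : ℕ} {H : Finset (Finset V)} (hH : IsUniform r H)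
    (hB : ¬ ContainsBerge (matchingHG (s + 1)) H) {D : Finset V} (hD : #D = s)
    (hdeg : ∀ v ∈ D, (3 * s + 1).choose (r - 1) + s < degree H v) :
    ∀ e ∈ H, #(e \ D) ≤ 1 := by
  intro e₀ he₀
  by_contra! h
  obtain ⟨u, hu, w, hw, huw⟩ := one_lt_card.1 h
  rw [mem_sdiff] at hu hw
  obtain ⟨f, hf⟩ := Function.Embedding.exists_of_card_eq_finset (α := Fin s)
    (by simpa using hD.symm)
  have hfD : ∀ i, f i ∈ D := fun i => hf ▸ mem_map_of_mem f (mem_univ i)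
  have hv : Function.Injective (Fin.cons u f : Fin (s + 1) → V) :=
    Fin.cons_injective_iff.2 ⟨fun ⟨i, hi⟩ => hu.2 (hi ▸ hfD i), f.injective⟩
  refine hB (containsBerge_matchingHG_of_designated _ hv fun i U ℰ hvU hU hℰ => ?_)
  cases i using Fin.cases with
  | zero =>
    -- the first step uses the edge `e₀`, which leaves `D ∪ {u}` through `w`
    have hU : univ.image (Fin.cons u f) = U := eq_of_subset_of_card_le hvU
      (by rw [card_image_of_injective _ hv]; simpa using hU)
    refine ⟨e₀, he₀, by simp_all, hu.1, fun hsub => ?_⟩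
    obtain ⟨i, -, hi⟩ := mem_image.1 (hU ▸ hsub hw.1)
    cases i using Fin.cases with
    | zero => exact huw hi
    | succ i => exact hw.2 (hi ▸ hfD i)
  | succ i =>
    have hi := i.isLt
    exact exists_mem_notMem_not_subset_of_lt_degree (N := 3 * s + 1) (L := s) hH
      (hU.trans (by simp only [Fin.val_succ]; omega))
      (hℰ.trans (by simp only [Fin.val_succ]; omega))
      (by simpa using hdeg _ (hfD i))

theorem containsCopy_univ_powersetCard_iff {k r : ℕ} {H : Finset (Finset V)} :
    ContainsCopy univ ((univ : Finset (Fin k)).powersetCard r) H ↔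
      ∃ T : Finset V, #T = k ∧ T.powersetCard r ⊆ H := by
  constructor
  · rintro ⟨g, hg, hgH⟩
    have hg' : Function.Injective g := fun i j => hg (mem_univ i) (mem_univ j)
    refine ⟨univ.map ⟨g, hg'⟩, by simp, ?_⟩
    rw [powersetCard_map]
    intro B hB
    obtain ⟨e, he, rfl⟩ := mem_map.1 hB
    simpa [map_eq_image] using hgH e he
  · rintro ⟨T, hT, hTH⟩
    let g : Fin k → V := fun i => (T.equivFinOfCardEq hT).symm i
    have hg : Function.Injective g :=
      Subtype.val_injective.comp (T.equivFinOfCardEq hT).symm.injective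
    refine ⟨g, hg.injOn, fun e he => hTH (mem_powersetCard.2 ⟨?_, ?_⟩)⟩
    · simp [g, image_subset_iff]
    · rw [card_image_of_injective _ hg, (mem_powersetCard.1 he).2]

def link (H : Finset (Finset V)) (D : Finset V) (x : V) : Finset (Finset V) :=
  D.powerset.filter (insert x · ∈ H)

theorem link_subset_powersetCard {r : ℕ} {H : Finset (Finset V)} (hH : IsUniform r H)
    {D : Finset V} {x : V} (hx : x ∉ D) : link H D x ⊆ D.powersetCard (r - 1) := by
  intro A hA
  obtain ⟨hAD, hxA⟩ := mem_filter.1 hA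
  rw [mem_powerset] at hAD
  have := hH _ hxA
  rw [card_insert_of_notMem fun h => hx (hAD h)] at this
  exact mem_powersetCard.2 ⟨hAD, by omega⟩

theorem card_filter_subset_le {r : ℕ} {H : Finset (Finset V)} (hH : IsUniform r H)
    (D : Finset V) : #(H.filter (· ⊆ D)) ≤ (#D).choose r := by
  rw [← card_powersetCard]
  exact card_le_card fun e he =>
    mem_powersetCard.2 ⟨(mem_filter.1 he).2, hH e (mem_filter.1 he).1⟩

theorem card_link_le {r : ℕ} {H : Finset (Finset V)} (hH : IsUniform r H) {D : Finset V}
    {x : V} (hx : x ∉ D) : #(link H D x) ≤ (#D).choose (r - 1) :=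
  (card_le_card (link_subset_powersetCard hH hx)).trans_eq (card_powersetCard _ _)

theorem card_le_card_add_card_add_sum_link [Fintype V] (H : Finset (Finset V))
    (D : Finset V) :
    #H ≤ #(H.filter fun e => 2 ≤ #(e \ D)) + #(H.filter (· ⊆ D)) +
      ∑ x ∈ Dᶜ, #(link H D x) := by
  have hpendant : H.filter (fun e => #(e \ D) = 1) ⊆
      Dᶜ.biUnion fun x => (link H D x).image (insert x) := by
    intro e he
    obtain ⟨heH, he1⟩ := mem_filter.1 he
    obtain ⟨x, hx⟩ := card_eq_one.1 he1
    have hxe : x ∈ e \ D := hx ▸ mem_singleton_self x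
    rw [mem_sdiff] at hxe
    have hins : insert x (e ∩ D) = e := by
      rw [insert_eq, ← hx, sdiff_union_inter]
    refine mem_biUnion.2 ⟨x, mem_compl.2 hxe.2, mem_image.2 ⟨e ∩ D, ?_, hins⟩⟩
    exact mem_filter.2 ⟨mem_powerset.2 inter_subset_right, by rwa [hins]⟩
  have hcover : H ⊆ (H.filter fun e => 2 ≤ #(e \ D)) ∪ H.filter (· ⊆ D) ∪
      H.filter (fun e => #(e \ D) = 1) := by
    intro e he
    simp only [mem_union, mem_filter, he, true_and, ← sdiff_eq_empty_iff_subset,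
      ← card_eq_zero]
    omega
  grw [card_le_card hcover, card_union_le, card_union_le, card_le_card hpendant, card_biUnion_le]
  exact Nat.add_le_add_left (sum_le_sum fun x _ => card_image_le) _

theorem powersetCard_insert_subset {r : ℕ} {H : Finset (Finset V)} {K : Finset V} {x : V}
    (hK : K.powersetCard r ⊆ H) (hx : ∀ A ∈ K.powersetCard (r - 1), insert x A ∈ H) :
    (insert x K).powersetCard r ⊆ H := by
  intro B hB
  obtain ⟨hBK, hBr⟩ := mem_powersetCard.1 hB
  by_cases hxB : x ∈ B
  · rw [← insert_erase hxB]
    refine hx _ (mem_powersetCard.2 ⟨fun y hy => ?_, by rw [card_erase_of_mem hxB, hBr]⟩)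
    exact (mem_insert.1 (hBK (mem_of_mem_erase hy))).resolve_left (ne_of_mem_erase hy)
  · exact hK (mem_powersetCard.2 ⟨(subset_insert_iff_of_notMem hxB).1 hBK, hBr⟩)

theorem card_link_lt {k r : ℕ} {H : Finset (Finset V)} (hH : IsUniform r H)
    (hfree : ¬ ∃ T : Finset V, #T = k ∧ T.powersetCard r ⊆ H)
    {D K : Finset V} (hKD : K ⊆ D) (hK : #K + 1 = k) (hKH : K.powersetCard r ⊆ H)
    {x : V} (hx : x ∉ D) : #(link H D x) < (#D).choose (r - 1) := by
  have : ∃ A ∈ K.powersetCard (r - 1), insert x A ∉ H := by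
    by_contra! h
    exact hfree ⟨insert x K, by rw [card_insert_of_notMem fun h => hx (hKD h), hK],
      powersetCard_insert_subset hKH h⟩
  obtain ⟨A, hA, hxA⟩ := this
  rw [← card_powersetCard]
  refine card_lt_card ((ssubset_iff_of_subset (link_subset_powersetCard hH hx)).2
    ⟨A, powersetCard_mono hKD hA, fun h => hxA (mem_filter.1 h).2⟩)

section Comap

variable {α : Type*} [Fintype α]

def comap (f : α ↪ V) (H : Finset (Finset V)) : Finset (Finset α) :=
  univ.filter (·.map f ∈ H)

theorem isUniform_comap {r : ℕ} {H : Finset (Finset V)} (f : α ↪ V) (hH : IsUniform r H) :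
    IsUniform r (comap f H) := fun e he => by
  rw [← card_map f]
  exact hH _ (mem_filter.1 he).2

theorem map_comap (f : α ↪ V) (H : Finset (Finset V)) :
    (comap f H).map (mapEmbedding f).toEmbedding = H.filter (· ⊆ univ.map f) := by
  ext e
  simp only [comap, mem_map, mem_filter, mem_univ, true_and, RelEmbedding.coe_toEmbedding,
    mapEmbedding_apply, subset_map_iff, subset_univ]
  grind

theorem powersetCard_subset_comap_iff {r : ℕ} {H : Finset (Finset V)} (f : α ↪ V)
    (T : Finset α) : T.powersetCard r ⊆ comap f H ↔ (T.map f).powersetCard r ⊆ H := by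
  simp only [powersetCard_map, subset_iff, comap, mem_map, mem_filter, mem_powersetCard,
    mem_univ, true_and, RelEmbedding.coe_toEmbedding, mapEmbedding_apply]
  exact ⟨fun h _ ⟨B, ⟨hB, hBr⟩, hBe⟩ => hBe ▸ h ⟨hB, hBr⟩,
    fun h B hB => h ⟨B, hB, rfl⟩⟩

theorem exists_powersetCard_subset_comap_iff {m r : ℕ} {H : Finset (Finset V)} (f : α ↪ V) :
    (∃ T : Finset α, #T = m ∧ T.powersetCard r ⊆ comap f H) ↔
      ∃ T ⊆ univ.map f, #T = m ∧ T.powersetCard r ⊆ H := by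
  constructor
  · rintro ⟨T, hT, hTH⟩
    exact ⟨T.map f, map_subset_map.2 (subset_univ T), by simpa using hT,
      (powersetCard_subset_comap_iff f T).1 hTH⟩
  · rintro ⟨T, hT, hTm, hTH⟩
    obtain ⟨T, -, rfl⟩ := subset_map_iff.1 hT
    exact ⟨T, by simpa using hTm, (powersetCard_subset_comap_iff f T).2 hTH⟩

end Comap

theorem exists_subset_card_sub_one_of_card_sdiff_le_one {r : ℕ} {H : Finset (Finset V)}
    {S T : Finset V} (hS : ∀ e ∈ H, #(e \ S) ≤ 1) (hr : 2 ≤ r) (hrT : r ≤ #T)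
    (hTH : T.powersetCard r ⊆ H) : ∃ T' ⊆ S, #T' = #T - 1 ∧ T'.powersetCard r ⊆ H := by
  have hout : #(T \ S) ≤ 1 := by
    by_contra! h
    obtain ⟨x, hx, y, hy, hxy⟩ := one_lt_card.1 h
    obtain ⟨B, hxyB, hBT, hB⟩ := exists_subsuperset_card_eq
      (insert_subset (mem_sdiff.1 hx).1 (singleton_subset_iff.2 (mem_sdiff.1 hy).1))
      ((card_pair hxy).trans_le hr) hrT
    have hxyBS : ({x, y} : Finset V) ⊆ B \ S := by
      rw [mem_sdiff] at hx hy
      simp only [insert_subset_iff, singleton_subset_iff] at hxyB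
      simp [insert_subset_iff, hxyB, hx.2, hy.2]
    have := (card_le_card hxyBS).trans (hS B (hTH (mem_powersetCard.2 ⟨hBT, hB⟩)))
    rw [card_pair hxy] at this
    omega
  obtain ⟨T', hT', hT'card⟩ := exists_subset_card_eq (s := T ∩ S) (n := #T - 1)
    (by have := card_sdiff_add_card_inter T S; omega)
  exact ⟨T', hT'.trans inter_subset_right, hT'card,
    (powersetCard_mono (hT'.trans inter_subset_left)).trans hTH⟩

theorem insert_sdiff_eq_singleton {S A : Finset V} {x : V} (hx : x ∉ S) (hA : A ⊆ S) :
    insert x A \ S = {x} := by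
  rw [insert_sdiff_of_notMem _ hx, sdiff_eq_empty_iff_subset.2 hA, insert_empty]

theorem insert_inter_eq_of_subset {S A : Finset V} {x : V} (hx : x ∉ S) (hA : A ⊆ S) :
    insert x A ∩ S = A := by
  rw [insert_inter_of_notMem hx, inter_eq_left.2 hA]

section PendantExtension

variable [Fintype V] {α : Type*} [Fintype α]

/-- `H₀` copied onto `S = univ.map f`, together with every `r`-set having exactly one vertex
outside `S`. -/
def pendantExtension (f : α ↪ V) (r : ℕ) (H₀ : Finset (Finset α)) : Finset (Finset V) :=
  H₀.map (mapEmbedding f).toEmbedding ∪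
    ((univ.map f)ᶜ ×ˢ (univ.map f).powersetCard (r - 1)).image fun p => insert p.1 p.2

theorem mem_pendantExtension {f : α ↪ V} {r : ℕ} {H₀ : Finset (Finset α)} {e : Finset V} :
    e ∈ pendantExtension f r H₀ ↔ (∃ e₀ ∈ H₀, e₀.map f = e) ∨
      ∃ x ∉ univ.map f, ∃ A ⊆ univ.map f, #A = r - 1 ∧ insert x A = e := by
  simp only [pendantExtension, mem_union, mem_map, mem_image, mem_product, mem_compl,
    mem_powersetCard, Prod.exists, RelEmbedding.coe_toEmbedding, mapEmbedding_apply]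
  grind

variable {f : α ↪ V} {r : ℕ} {H₀ : Finset (Finset α)}

theorem card_sdiff_le_one_of_mem_pendantExtension {e : Finset V}
    (he : e ∈ pendantExtension f r H₀) : #(e \ univ.map f) ≤ 1 := by
  rcases mem_pendantExtension.1 he with ⟨e₀, -, rfl⟩ | ⟨x, hx, A, hA, -, rfl⟩
  · simp [sdiff_eq_empty_iff_subset.2 (map_subset_map.2 (subset_univ e₀))]
  · simp [insert_sdiff_eq_singleton hx hA]

theorem isUniform_pendantExtension (hr : 1 ≤ r) (hH₀ : IsUniform r H₀) :
    IsUniform r (pendantExtension f r H₀) := by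
  intro e he
  rcases mem_pendantExtension.1 he with ⟨e₀, he₀, rfl⟩ | ⟨x, hx, A, hA, hAr, rfl⟩
  · rw [card_map, hH₀ e₀ he₀]
  · rw [card_insert_of_notMem fun h => hx (hA h), hAr]
    omega

theorem comap_pendantExtension : comap f (pendantExtension f r H₀) = H₀ := by
  ext e₀
  simp only [comap, mem_filter, mem_univ, true_and, mem_pendantExtension]
  constructor
  · rintro (⟨e₁, he₁, h⟩ | ⟨x, hx, A, -, -, h⟩)
    · rwa [← map_injective f h]
    · exact absurd (map_subset_map.2 (subset_univ e₀) (h ▸ mem_insert_self x A)) hx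
  · exact fun h => Or.inl ⟨e₀, h, rfl⟩

theorem card_pendantExtension :
    #(pendantExtension f r H₀) =
      #H₀ + (Fintype.card α).choose (r - 1) * (Fintype.card V - Fintype.card α) := by
  rw [pendantExtension, card_union_of_disjoint, card_map, card_image_of_injOn, card_product,
    card_compl, card_powersetCard, card_map, card_univ, mul_comm]
  · rintro ⟨x, A⟩ hxA ⟨y, B⟩ hyB h
    simp only [coe_product, Set.mem_prod, mem_coe, mem_compl, mem_powersetCard] at hxA hyB h
    have hxy := insert_sdiff_eq_singleton hxA.1 hxA.2.1
    rw [h, insert_sdiff_eq_singleton hyB.1 hyB.2.1, singleton_inj] at hxy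
    subst hxy
    have hAB := insert_inter_eq_of_subset hxA.1 hxA.2.1
    rw [h, insert_inter_eq_of_subset hyB.1 hyB.2.1] at hAB
    rw [hAB]
  · refine disjoint_left.2 fun e he he' => ?_
    obtain ⟨e₀, -, rfl⟩ := mem_map.1 he
    obtain ⟨⟨x, A⟩, hxA, h⟩ := mem_image.1 he'
    have hx : x ∈ e₀.map f := (show insert x A = e₀.map f from h) ▸ mem_insert_self x A
    exact (mem_compl.1 (mem_product.1 hxA).1) (map_subset_map.2 (subset_univ e₀) hx)

theorem not_containsBerge_pendantExtension {s : ℕ} (hs : Fintype.card α ≤ s) :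
    ¬ ContainsBerge (matchingHG (s + 1)) (pendantExtension f r H₀) :=
  not_containsBerge_matchingHG_of_card_sdiff_le_one (by simpa using hs) fun _ =>
    card_sdiff_le_one_of_mem_pendantExtension

theorem not_exists_powersetCard_subset_pendantExtension {k : ℕ} (hr : 2 ≤ r) (hrk : r ≤ k)
    (hH₀ : ¬ ∃ T : Finset α, #T = k - 1 ∧ T.powersetCard r ⊆ H₀) :
    ¬ ∃ T : Finset V, #T = k ∧ T.powersetCard r ⊆ pendantExtension f r H₀ := by
  rintro ⟨T, rfl, hTH⟩
  obtain ⟨T', hT'S, hT', hT'H⟩ := exists_subset_card_sub_one_of_card_sdiff_le_one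
    (fun _ => card_sdiff_le_one_of_mem_pendantExtension) hr hrk hTH
  rw [← comap_pendantExtension (f := f) (r := r) (H₀ := H₀)] at hH₀
  exact hH₀ ((exists_powersetCard_subset_comap_iff f).2 ⟨T', hT'S, hT', hT'H⟩)

end PendantExtension

theorem Nat.choose_pred_lt_choose {n k : ℕ} (hk : 0 < k) (hkn : k ≤ n) :
    (n - 1).choose k < n.choose k := by
  obtain ⟨m, rfl⟩ : ∃ m, n = m + 1 := ⟨n - 1, by omega⟩
  obtain ⟨j, rfl⟩ : ∃ j, k = j + 1 := ⟨k - 1, by omega⟩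
  rw [Nat.choose_succ_succ', Nat.add_sub_cancel]
  have := Nat.choose_pos (show j ≤ m by omega)
  omega

section Exr

variable {n r : ℕ} {Free : Finset (Finset (Fin n)) → Prop}

theorem bddAbove_exr :
    BddAbove {m | ∃ H : Finset (Finset (Fin n)), IsUniform r H ∧ Free H ∧ #H = m} :=
  ⟨_, fun _ ⟨H, _, _, hm⟩ => hm ▸ card_le_univ H⟩

theorem exr_le_of_forall {m : ℕ} (h : ∀ H, IsUniform r H → Free H → #H ≤ m) :
    exr n r Free ≤ m :=
  csSup_le' fun _ ⟨H, hH, hF, hm⟩ => hm ▸ h H hH hF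

theorem le_exr {H : Finset (Finset (Fin n))} (hH : IsUniform r H) (hF : Free H) :
    #H ≤ exr n r Free :=
  le_csSup bddAbove_exr ⟨H, hH, hF, rfl⟩

theorem exists_card_eq_exr (h : ∃ H, IsUniform r H ∧ Free H) :
    ∃ H, IsUniform r H ∧ Free H ∧ #H = exr n r Free := by
  obtain ⟨H, hH, hF⟩ := h
  exact Nat.sSup_mem
    (s := {m | ∃ H : Finset (Finset (Fin n)), IsUniform r H ∧ Free H ∧ #H = m})
    ⟨_, H, hH, hF, rfl⟩ bddAbove_exr

end Exr

theorem card_filter_subset_le_exr {s r k : ℕ} {H : Finset (Finset V)} (hH : IsUniform r H)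
    {D : Finset V} (hD : #D = s) (hDK : ¬ ∃ K ⊆ D, #K = k ∧ K.powersetCard r ⊆ H) :
    #(H.filter (· ⊆ D)) ≤
      exr s r (fun H₀ => ¬ ∃ T, #T = k ∧ T.powersetCard r ⊆ H₀) := by
  obtain ⟨f, rfl⟩ := Function.Embedding.exists_of_card_eq_finset (α := Fin s) (s := D)
    (by simpa using hD.symm)
  rw [← map_comap, card_map]
  exact le_exr (isUniform_comap f hH) fun h => hDK ((exists_powersetCard_subset_comap_iff f).1 h)

theorem card_le_exr_add_of_not_containsBerge [Fintype V] {s r k : ℕ} (hr : 2 ≤ r)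
    (hrs : r ≤ s + 1) (hk : 1 ≤ k) {H : Finset (Finset V)} (hH : IsUniform r H)
    (hB : ¬ ContainsBerge (matchingHG (s + 1)) H)
    (hK : ¬ ∃ T : Finset V, #T = k ∧ T.powersetCard r ⊆ H)
    (hn : s * (2 * ((3 * s + 1).choose (r - 1) + s) + 1) + s.choose r +
      s * (s - 1).choose (r - 1) + s ≤ Fintype.card V) :
    #H ≤ exr s r (fun H₀ => ¬ ∃ T, #T = k - 1 ∧ T.powersetCard r ⊆ H₀) +
      s.choose (r - 1) * (Fintype.card V - s) := by
  set d := (3 * s + 1).choose (r - 1) + s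
  set D := univ.filter fun v => d < degree H v
  have hD : #D ≤ s := card_filter_lt_degree_le hH hB
  have hsplit := card_le_card_add_card_add_sum_link H D
  have hlink : ∀ x ∈ Dᶜ, #(link H D x) ≤ (#D).choose (r - 1) :=
    fun x hx => card_link_le hH (mem_compl.1 hx)
  obtain ⟨m, hm⟩ : ∃ m, Fintype.card V = s + m :=
    ⟨_, (Nat.add_sub_cancel' (by omega)).symm⟩
  have hDc : #Dᶜ = s + m - #D := hm ▸ card_compl D
  rw [hm, Nat.add_sub_cancel_left]
  rw [hm] at hn
  rcases hD.lt_or_eq with hlt | hDs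
  · have hspread := card_filter_two_le_card_sdiff_le (d := d) (D := D)
      (fun x hx => by simpa [D] using hx) hB
    have hinside := (card_filter_subset_le hH D).trans (Nat.choose_le_choose r hD)
    have hsum : ∑ x ∈ Dᶜ, #(link H D x) ≤ (s + m) * (s - 1).choose (r - 1) := by
      grw [sum_le_card_nsmul _ _ _ hlink, smul_eq_mul,
        Nat.choose_le_choose _ (by omega : #D ≤ s - 1)]
      exact Nat.mul_le_mul_right _ (by omega)
    have hpascal := Nat.mul_le_mul_right m
      (Nat.choose_pred_lt_choose (n := s) (k := r - 1) (by omega) (by omega))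
    linarith
  · have hshape := card_sdiff_le_one_of_lt_degree hH hB hDs fun v hv => (mem_filter.1 hv).2
    have hspread : #(H.filter fun e => 2 ≤ #(e \ D)) = 0 :=
      card_eq_zero.2 (filter_false_of_mem fun e he => by have := hshape e he; omega)
    rw [hDs] at hlink
    have hDc' : #Dᶜ = m := by omega
    by_cases hclique : ∃ K ⊆ D, #K = k - 1 ∧ K.powersetCard r ⊆ H
    · obtain ⟨K, hKD, hKk, hKH⟩ := hclique
      have hsum := sum_le_card_nsmul Dᶜ (fun x => #(link H D x) + 1) (s.choose (r - 1))
        fun x hx => by simpa [hDs] using card_link_lt hH hK hKD (by omega) hKH (mem_compl.1 hx)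
      rw [sum_add_distrib, sum_const, smul_eq_mul, smul_eq_mul, mul_one, hDc'] at hsum
      have hinside := card_filter_subset_le hH D
      rw [hDs] at hinside
      nlinarith
    · have hinside := card_filter_subset_le_exr hH hDs hclique
      have hsum := sum_le_card_nsmul _ _ _ hlink
      rw [smul_eq_mul, hDc'] at hsum
      linarith

theorem exr_berge_matching_and_complete_hypergraph_general
    (s r k : ℕ) (hr : 2 ≤ r) (hrs : r ≤ s + 1) (hk : r + 1 ≤ k) :
    ∃ n₀ : ℕ, ∀ n : ℕ, n₀ ≤ n →
      exr n r (fun H => ¬ ContainsBerge (matchingHG (s + 1)) H ∧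
          ¬ ContainsCopy Finset.univ
            ((Finset.univ : Finset (Fin k)).powersetCard r) H) =
        exr s r (fun H => ¬ ContainsCopy Finset.univ
            ((Finset.univ : Finset (Fin (k - 1))).powersetCard r) H) +
          Nat.choose s (r - 1) * (n - s) := by
  simp only [containsCopy_univ_powersetCard_iff]
  refine ⟨s * (2 * ((3 * s + 1).choose (r - 1) + s) + 1) + s.choose r +
    s * (s - 1).choose (r - 1) + s, fun n hn => le_antisymm ?_ ?_⟩
  · refine exr_le_of_forall fun H hH ⟨hB, hK⟩ => ?_
    simpa using card_le_exr_add_of_not_containsBerge hr hrs (by omega) hH hB hK (by simpa using hn)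
  · obtain ⟨H₀, hH₀, hfree, hcard⟩ := exists_card_eq_exr
      (Free := fun H₀ => ¬ ∃ T : Finset (Fin s), #T = k - 1 ∧ T.powersetCard r ⊆ H₀)
      ⟨∅, fun e he => absurd he (notMem_empty e), fun ⟨T, hT, hTH⟩ =>
        (powersetCard_nonempty.2 (by omega)).ne_empty (subset_empty.1 hTH)⟩
    let f := Fin.castLEEmb (show s ≤ n by omega)
    calc _ = #(pendantExtension f r H₀) := by simp [card_pendantExtension, hcard]
      _ ≤ _ := le_exr (isUniform_pendantExtension (by omega) hH₀)
        ⟨not_containsBerge_pendantExtension (by simp),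
          not_exists_powersetCard_subset_pendantExtension hr (by omega) hfree⟩

/-- Corollary: for `1 ≤ s`, `2 ≤ r ≤ s+1`, `k ≥ r+1` and all sufficiently large `n`,
`ex_r(n, BM_{s+1} ∪ {K_k^{(r)}}) = ex_r(s, {K_{k-1}^{(r)}}) + C(s, r-1)(n-s)`. -/
theorem exr_berge_matching_and_complete_hypergraph
    (s r k : ℕ) (hs : 1 ≤ s) (hr : 2 ≤ r) (hrs : r ≤ s + 1) (hk : r + 1 ≤ k) :
    ∃ n₀ : ℕ, ∀ n : ℕ, n₀ ≤ n →
      exr n r (fun H => ¬ ContainsBerge (matchingHG (s + 1)) H ∧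
          ¬ ContainsCopy Finset.univ
            ((Finset.univ : Finset (Fin k)).powersetCard r) H) =
        exr s r (fun H => ¬ ContainsCopy Finset.univ
            ((Finset.univ : Finset (Fin (k - 1))).powersetCard r) H) +
          Nat.choose s (r - 1) * (n - s) :=
  exr_berge_matching_and_complete_hypergraph_general s r k hr hrs hk
end

section
/- Let s ≥ 1 and r ≥ 2 be fixed integers and let G be a bipartite graph with at least one edge, with p = p(G). If p ≤ s < r−1, then for all sufficiently large n, ex_r(n, BM_{s+1} ∪ BG) ≤ max{ s, C(2s+1, r) }. -/
open Finset

set_option linter.unusedSectionVars false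
set_option linter.unusedVariables false
set_option maxHeartbeats 1600000

/-- `red` is the red colour class of a proper red-blue (proper 2-)coloring of the
graph with edge set `G`: no edge is monochromatic. -/
def ProperRB {V : Type*} [DecidableEq V] (G : Finset (Finset V)) (red : Finset V) : Prop :=
  ∀ e ∈ G, ¬ e ⊆ red ∧ ¬ Disjoint e red

section BergeHelpers

variable {V : Type*} [DecidableEq V]

def IsMatch (H : Finset (Finset V)) (Q : Finset (Finset V × Finset V)) : Prop :=
  (∀ q ∈ Q, q.2 ∈ H ∧ q.1 ⊆ q.2 ∧ q.1.card = 2) ∧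
  (∀ q ∈ Q, ∀ q' ∈ Q, q ≠ q' → q.2 ≠ q'.2 ∧ Disjoint q.1 q'.1)

def HasM (H : Finset (Finset V)) (k : ℕ) : Prop :=
  ∃ Q, IsMatch H Q ∧ Q.card = k

lemma hasM_zero (H : Finset (Finset V)) : HasM H 0 :=
  ⟨∅, ⟨fun q hq => absurd hq (Finset.notMem_empty q),
       fun q hq => absurd hq (Finset.notMem_empty q)⟩, rfl⟩

lemma isMatch_subset {H : Finset (Finset V)} {Q Q' : Finset (Finset V × Finset V)}
    (h : IsMatch H Q) (hsub : Q' ⊆ Q) : IsMatch H Q' :=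
  ⟨fun q hq => h.1 q (hsub hq), fun q hq q' hq' => h.2 q (hsub hq) q' (hsub hq')⟩

lemma hasM_mono {H : Finset (Finset V)} {k l : ℕ} (h : HasM H k) (hlk : l ≤ k) : HasM H l := by
  obtain ⟨Q, hQ, hcard⟩ := h
  obtain ⟨B, hBQ, hB⟩ := Finset.exists_subset_card_eq (show l ≤ Q.card by omega)
  exact ⟨B, isMatch_subset hQ hBQ, hB⟩

lemma isMatch_insert {H : Finset (Finset V)} {Q : Finset (Finset V × Finset V)}
    (hQ : IsMatch H Q) {p h : Finset V} (hh : h ∈ H) (hp : p ⊆ h) (hp2 : p.card = 2)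
    (hhost : ∀ q ∈ Q, q.2 ≠ h) (hdisj : ∀ q ∈ Q, Disjoint p q.1) :
    IsMatch H (insert (p, h) Q) ∧ (p, h) ∉ Q := by
  have hnm : (p, h) ∉ Q := fun hmem => (hhost _ hmem) rfl
  refine ⟨⟨?_, ?_⟩, hnm⟩
  · intro q hq
    rcases Finset.mem_insert.mp hq with rfl | hq
    · exact ⟨hh, hp, hp2⟩
    · exact hQ.1 q hq
  · intro q hq q' hq' hne
    rcases Finset.mem_insert.mp hq with rfl | hq <;>
      rcases Finset.mem_insert.mp hq' with rfl | hq'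
    · exact absurd rfl hne
    · exact ⟨fun h' => hhost q' hq' h'.symm, hdisj q' hq'⟩
    · exact ⟨hhost q hq, (hdisj q hq).symm⟩
    · exact hQ.2 q hq q' hq' hne

/-- Extension: a new edge with a pair avoiding all pairs yields a bigger matching. -/
lemma match_ext {H : Finset (Finset V)} {Q : Finset (Finset V × Finset V)} {t : ℕ}
    (hQ : IsMatch H Q) (hQc : Q.card = t) (hmax : ∀ k, HasM H k → k ≤ t)
    {e : Finset V} (he : e ∈ H) (hens : ∀ q ∈ Q, q.2 ≠ e)
    {a b : V} (ha : a ∈ e) (hb : b ∈ e) (hab : a ≠ b)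
    (haU : ∀ q ∈ Q, a ∉ q.1) (hbU : ∀ q ∈ Q, b ∉ q.1) : False := by
  have hdisj : ∀ q ∈ Q, Disjoint ({a, b} : Finset V) q.1 := by
    intro q hq
    rw [Finset.disjoint_left]
    intro z hz
    rcases Finset.mem_insert.mp hz with rfl | hz
    · exact haU q hq
    · rw [Finset.mem_singleton.mp hz]; exact hbU q hq
  have hsub : ({a, b} : Finset V) ⊆ e := by
    intro z hz
    rcases Finset.mem_insert.mp hz with rfl | hz
    · exact ha
    · rw [Finset.mem_singleton.mp hz]; exact hb
  obtain ⟨hins, hnm⟩ := isMatch_insert hQ he hsub (Finset.card_pair hab) hens hdisj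
  have := hmax (t + 1) ⟨_, hins, by rw [Finset.card_insert_of_notMem hnm, hQc]⟩
  omega

/-- L1: a nonspecial edge has at most one vertex outside the union of the pairs. -/
lemma nonspecial_outside {H : Finset (Finset V)} {Q : Finset (Finset V × Finset V)} {t : ℕ}
    (hQ : IsMatch H Q) (hQc : Q.card = t) (hmax : ∀ k, HasM H k → k ≤ t)
    {e : Finset V} (he : e ∈ H) (hens : ∀ q ∈ Q, q.2 ≠ e) :
    (e \ Q.biUnion Prod.fst).card ≤ 1 := by
  by_contra hc
  obtain ⟨a, ha, b, hb, hab⟩ := Finset.one_lt_card.mp (show 1 < (e \ Q.biUnion Prod.fst).card by omega)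
  have hU : ∀ z ∈ e \ Q.biUnion Prod.fst, ∀ q ∈ Q, z ∉ q.1 := by
    intro z hz q hq hzq
    exact (Finset.mem_sdiff.mp hz).2 (Finset.mem_biUnion.mpr ⟨q, hq, hzq⟩)
  exact match_ext hQ hQc hmax he hens (Finset.mem_sdiff.mp ha).1 (Finset.mem_sdiff.mp hb).1
    hab (hU a ha) (hU b hb)

/-- Extension with two new edges replacing one pair. -/
lemma match_ext2 {H : Finset (Finset V)} {Q : Finset (Finset V × Finset V)} {t : ℕ}
    (hQ : IsMatch H Q) (hQc : Q.card = t) (hmax : ∀ k, HasM H k → k ≤ t)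
    {e e' : Finset V} (he : e ∈ H) (he' : e' ∈ H) (hee' : e ≠ e')
    (hens : ∀ q ∈ Q, q.2 ≠ e) (hens' : ∀ q ∈ Q, q.2 ≠ e')
    {x x' : V} (hx : x ∈ e) (hx' : x' ∈ e') (hxx' : x ≠ x')
    (hxU : ∀ q ∈ Q, x ∉ q.1) (hx'U : ∀ q ∈ Q, x' ∉ q.1)
    {q0 : Finset V × Finset V} (hq0 : q0 ∈ Q) {u v : V} (hu : u ∈ q0.1) (hv : v ∈ q0.1)
    (huv : u ≠ v) (hue : u ∈ e) (hve' : v ∈ e') : False := by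
  have ht1 : 1 ≤ t := by
    rw [← hQc]; exact Finset.card_pos.mpr ⟨q0, hq0⟩
  have hQ1 : IsMatch H (Q.erase q0) := isMatch_subset hQ (Finset.erase_subset _ _)
  have hdisjq0 : ∀ q ∈ Q.erase q0, Disjoint q0.1 q.1 := fun q hq =>
    (hQ.2 q0 hq0 q (Finset.mem_of_mem_erase hq) (Ne.symm (Finset.ne_of_mem_erase hq))).2
  -- insert ({v,x'}, e')
  have hsub1 : ({v, x'} : Finset V) ⊆ e' := by
    intro z hz
    rcases Finset.mem_insert.mp hz with rfl | hz
    · exact hve'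
    · rw [Finset.mem_singleton.mp hz]; exact hx'
  have hvx' : v ≠ x' := fun h => hx'U q0 hq0 (h ▸ hv)
  obtain ⟨hins1, hnm1⟩ := isMatch_insert hQ1 he' hsub1 (Finset.card_pair hvx')
    (fun q hq => hens' q (Finset.mem_of_mem_erase hq))
    (by
      intro q hq
      rw [Finset.disjoint_left]
      intro z hz
      rcases Finset.mem_insert.mp hz with rfl | hz
      · exact Finset.disjoint_left.mp (hdisjq0 q hq) hv
      · rw [Finset.mem_singleton.mp hz]
        exact fun h => hx'U q (Finset.mem_of_mem_erase hq) h)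
  -- insert ({u,x}, e)
  have hsub2 : ({u, x} : Finset V) ⊆ e := by
    intro z hz
    rcases Finset.mem_insert.mp hz with rfl | hz
    · exact hue
    · rw [Finset.mem_singleton.mp hz]; exact hx
  have hux : u ≠ x := fun h => hxU q0 hq0 (h ▸ hu)
  obtain ⟨hins2, hnm2⟩ := isMatch_insert hins1 he hsub2 (Finset.card_pair hux)
    (by
      intro q hq
      rcases Finset.mem_insert.mp hq with rfl | hq
      · exact fun h => hee' h.symm
      · exact hens q (Finset.mem_of_mem_erase hq))
    (by
      intro q hq
      rcases Finset.mem_insert.mp hq with rfl | hq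
      · rw [Finset.disjoint_left]
        intro z hz
        rcases Finset.mem_insert.mp hz with rfl | hz
        · intro h
          rcases Finset.mem_insert.mp h with h | h
          · exact huv h
          · exact hx'U q0 hq0 (by rw [← Finset.mem_singleton.mp h]; exact hu)
        · rw [Finset.mem_singleton.mp hz]
          intro h
          rcases Finset.mem_insert.mp h with h | h
          · exact hxU q0 hq0 (by rw [h]; exact hv)
          · exact hxx' (Finset.mem_singleton.mp h)
      · rw [Finset.disjoint_left]
        intro z hz
        rcases Finset.mem_insert.mp hz with rfl | hz
        · exact Finset.disjoint_left.mp (hdisjq0 q hq) hu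
        · rw [Finset.mem_singleton.mp hz]
          exact fun h => hxU q (Finset.mem_of_mem_erase hq) h)
  have hcard : (insert (({u, x} : Finset V), e)
      (insert (({v, x'} : Finset V), e') (Q.erase q0))).card = t + 1 := by
    rw [Finset.card_insert_of_notMem hnm2, Finset.card_insert_of_notMem hnm1,
      Finset.card_erase_of_mem hq0, hQc]
    omega
  have := hmax (t + 1) ⟨_, hins2, hcard⟩
  omega

/-- The counting argument. -/
lemma filter_lt {H : Finset (Finset V)} {Q : Finset (Finset V × Finset V)} {t r : ℕ}
    (hr : t + 2 ≤ r) (hQ : IsMatch H Q) (hQc : Q.card = t)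
    {e e' : Finset V}
    (heU : r ≤ (e ∩ Q.biUnion Prod.fst).card + 1)
    (hgood : ∀ q ∈ Q, ∀ u ∈ q.1, ∀ v ∈ q.1, u ≠ v → ¬(u ∈ e ∧ v ∈ e')) :
    (Q.filter fun q => q.1 ⊆ e').card < (Q.filter fun q => q.1 ⊆ e).card := by
  classical
  set A := Q.filter (fun q => q.1 ⊆ e) with hA
  set B := Q.filter (fun q => q.1 ⊆ e') with hB
  -- pairs in B are disjoint from e
  have hBdisj : ∀ q ∈ B, (e ∩ q.1).card = 0 := by
    intro q hq
    obtain ⟨hqQ, hqe'⟩ := Finset.mem_filter.mp hq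
    rw [Finset.card_eq_zero]
    by_contra hne
    obtain ⟨z, hz⟩ := Finset.nonempty_iff_ne_empty.mpr hne
    obtain ⟨hze, hzq⟩ := Finset.mem_inter.mp hz
    obtain ⟨c, d, hcd, hq1⟩ := Finset.card_eq_two.mp (hQ.1 q hqQ).2.2
    have : ∃ o, o ∈ q.1 ∧ o ≠ z := by
      rcases Finset.mem_insert.mp (hq1 ▸ hzq) with rfl | hzd
      · exact ⟨d, by rw [hq1]; exact Finset.mem_insert_of_mem (Finset.mem_singleton_self d),
          fun h => hcd h.symm⟩
      · rw [Finset.mem_singleton.mp hzd]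
        exact ⟨c, by rw [hq1]; exact Finset.mem_insert_self c _, hcd⟩
    obtain ⟨o, hoq, hoz⟩ := this
    exact hgood q hqQ z hzq o hoq (fun h => hoz h.symm) ⟨hze, hqe' hoq⟩
  -- pairs not in A meet e at most once
  have hrest : ∀ q ∈ Q, q ∉ A → (e ∩ q.1).card ≤ 1 := by
    intro q hqQ hqA
    by_contra hc
    obtain ⟨z1, hz1, z2, hz2, hz12⟩ := Finset.one_lt_card.mp
      (show 1 < (e ∩ q.1).card by omega)
    have hq2 := (hQ.1 q hqQ).2.2
    have hsub : q.1 ⊆ e := by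
      have hs : ({z1, z2} : Finset V) ⊆ q.1 := by
        intro z hz
        rcases Finset.mem_insert.mp hz with rfl | hz
        · exact (Finset.mem_inter.mp hz1).2
        · rw [Finset.mem_singleton.mp hz]; exact (Finset.mem_inter.mp hz2).2
      have : ({z1, z2} : Finset V) = q.1 :=
        Finset.eq_of_subset_of_card_le hs (by rw [hq2, Finset.card_pair hz12])
      intro z hz
      rw [← this] at hz
      rcases Finset.mem_insert.mp hz with rfl | hz
      · exact (Finset.mem_inter.mp hz1).1
      · rw [Finset.mem_singleton.mp hz]; exact (Finset.mem_inter.mp hz2).1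
    exact hqA (Finset.mem_filter.mpr ⟨hqQ, hsub⟩)
  have hAB : Disjoint A B := by
    rw [Finset.disjoint_left]
    intro q hqA hqB
    obtain ⟨hqQ, hqe⟩ := Finset.mem_filter.mp hqA
    obtain ⟨_, hqe'⟩ := Finset.mem_filter.mp hqB
    obtain ⟨c, d, hcd, hq1⟩ := Finset.card_eq_two.mp (hQ.1 q hqQ).2.2
    have hcq : c ∈ q.1 := by rw [hq1]; exact Finset.mem_insert_self c _
    have hdq : d ∈ q.1 := by rw [hq1]; exact Finset.mem_insert_of_mem (Finset.mem_singleton_self d)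
    exact hgood q hqQ c hcq d hdq hcd ⟨hqe hcq, hqe' hdq⟩
  -- sum bound
  have hcover : (e ∩ Q.biUnion Prod.fst) ⊆ Q.biUnion (fun q => e ∩ q.1) := by
    intro z hz
    obtain ⟨hze, hzU⟩ := Finset.mem_inter.mp hz
    obtain ⟨q, hq, hzq⟩ := Finset.mem_biUnion.mp hzU
    exact Finset.mem_biUnion.mpr ⟨q, hq, Finset.mem_inter.mpr ⟨hze, hzq⟩⟩
  have hsum : (e ∩ Q.biUnion Prod.fst).card ≤ ∑ q ∈ Q, (e ∩ q.1).card :=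
    le_trans (Finset.card_le_card hcover) (Finset.card_biUnion_le)
  have hsplit : ∑ q ∈ Q, (e ∩ q.1).card
      = ∑ q ∈ A, (e ∩ q.1).card + ∑ q ∈ Q \ A, (e ∩ q.1).card := by
    rw [← Finset.sum_union (Finset.disjoint_sdiff)]
    congr 1
    exact (Finset.union_sdiff_of_subset (Finset.filter_subset _ _)).symm
  have hsplit2 : ∑ q ∈ Q \ A, (e ∩ q.1).card
      = ∑ q ∈ B, (e ∩ q.1).card + ∑ q ∈ (Q \ A) \ B, (e ∩ q.1).card := by
    rw [← Finset.sum_union (Finset.disjoint_sdiff)]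
    congr 1
    refine (Finset.union_sdiff_of_subset ?_).symm
    intro q hq
    exact Finset.mem_sdiff.mpr ⟨Finset.filter_subset _ _ hq, Finset.disjoint_right.mp hAB hq⟩
  have hsA : ∑ q ∈ A, (e ∩ q.1).card ≤ 2 * A.card := by
    calc ∑ q ∈ A, (e ∩ q.1).card ≤ ∑ q ∈ A, 2 := by
          refine Finset.sum_le_sum ?_
          intro q hq
          have := (hQ.1 q (Finset.filter_subset _ _ hq)).2.2
          calc (e ∩ q.1).card ≤ q.1.card := Finset.card_le_card (Finset.inter_subset_right)
            _ = 2 := this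
      _ = 2 * A.card := by rw [Finset.sum_const, smul_eq_mul]; ring
  have hsB : ∑ q ∈ B, (e ∩ q.1).card = 0 := Finset.sum_eq_zero hBdisj
  have hsR : ∑ q ∈ (Q \ A) \ B, (e ∩ q.1).card ≤ ((Q \ A) \ B).card := by
    calc ∑ q ∈ (Q \ A) \ B, (e ∩ q.1).card ≤ ∑ _q ∈ (Q \ A) \ B, 1 := by
          refine Finset.sum_le_sum ?_
          intro q hq
          have hq1 := Finset.mem_sdiff.mp (Finset.mem_sdiff.mp hq).1
          exact hrest q hq1.1 hq1.2
      _ = ((Q \ A) \ B).card := by rw [Finset.sum_const, smul_eq_mul, mul_one]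
  have hAsub : A ⊆ Q := Finset.filter_subset _ _
  have hBsub : B ⊆ Q \ A := by
    intro q hq
    exact Finset.mem_sdiff.mpr ⟨Finset.filter_subset _ _ hq, Finset.disjoint_right.mp hAB hq⟩
  have hcA : A.card ≤ t := hQc ▸ Finset.card_le_card hAsub
  have hcR : ((Q \ A) \ B).card = t - A.card - B.card := by
    rw [Finset.card_sdiff_of_subset hBsub, Finset.card_sdiff_of_subset hAsub, hQc]
  have hcB : B.card ≤ t - A.card := hQc ▸ Finset.card_sdiff_of_subset hAsub ▸ Finset.card_le_card hBsub
  omega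

/-- L2: all nonspecial edges have the same vertex outside the union of pairs. -/
lemma outside_unique {H : Finset (Finset V)} {Q : Finset (Finset V × Finset V)} {t r : ℕ}
    (hr : t + 2 ≤ r) (hQ : IsMatch H Q) (hQc : Q.card = t) (hmax : ∀ k, HasM H k → k ≤ t)
    {e e' : Finset V} (he : e ∈ H) (he' : e' ∈ H)
    (hens : ∀ q ∈ Q, q.2 ≠ e) (hens' : ∀ q ∈ Q, q.2 ≠ e')
    (hce : e.card = r) (hce' : e'.card = r)
    {x x' : V} (hx : x ∈ e \ Q.biUnion Prod.fst) (hx' : x' ∈ e' \ Q.biUnion Prod.fst) :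
    x = x' := by
  by_contra hxx'
  have hL1e := nonspecial_outside hQ hQc hmax he hens
  have hL1e' := nonspecial_outside hQ hQc hmax he' hens'
  have hee' : e ≠ e' := by
    rintro rfl
    have : 1 < (e \ Q.biUnion Prod.fst).card := Finset.one_lt_card.mpr ⟨x, hx, x', hx', hxx'⟩
    omega
  have hxe : x ∈ e := (Finset.mem_sdiff.mp hx).1
  have hx'e' : x' ∈ e' := (Finset.mem_sdiff.mp hx').1
  have hxUall : ∀ q ∈ Q, x ∉ q.1 := fun q hq hxq =>
    (Finset.mem_sdiff.mp hx).2 (Finset.mem_biUnion.mpr ⟨q, hq, hxq⟩)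
  have hx'Uall : ∀ q ∈ Q, x' ∉ q.1 := fun q hq hxq =>
    (Finset.mem_sdiff.mp hx').2 (Finset.mem_biUnion.mpr ⟨q, hq, hxq⟩)
  have hgood : ∀ q ∈ Q, ∀ u ∈ q.1, ∀ v ∈ q.1, u ≠ v → ¬(u ∈ e ∧ v ∈ e') := by
    intro q hq u hu v hv huv ⟨hue, hve'⟩
    exact match_ext2 hQ hQc hmax he he' hee' hens hens' hxe hx'e' hxx' hxUall hx'Uall
      hq hu hv huv hue hve'
  have hgood' : ∀ q ∈ Q, ∀ u ∈ q.1, ∀ v ∈ q.1, u ≠ v → ¬(u ∈ e' ∧ v ∈ e) := by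
    intro q hq u hu v hv huv ⟨hue', hve⟩
    exact hgood q hq v hv u hu huv.symm ⟨hve, hue'⟩
  have heU : r ≤ (e ∩ Q.biUnion Prod.fst).card + 1 := by
    have := Finset.card_inter_add_card_sdiff e (Q.biUnion Prod.fst)
    omega
  have he'U : r ≤ (e' ∩ Q.biUnion Prod.fst).card + 1 := by
    have := Finset.card_inter_add_card_sdiff e' (Q.biUnion Prod.fst)
    omega
  have h1 := filter_lt hr hQ hQc heU hgood
  have h2 := filter_lt hr hQ hQc he'U hgood'
  omega

end BergeHelpers

lemma le_choose (n k : ℕ) (h1 : 1 ≤ k) (h2 : k + 1 ≤ n) : n ≤ n.choose k := by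
  induction n generalizing k with
  | zero => omega
  | succ m ih =>
    obtain ⟨k', rfl⟩ : ∃ k', k = k' + 1 := ⟨k - 1, by omega⟩
    rcases Nat.eq_or_lt_of_le h1 with h | h
    · rw [← h, Nat.choose_one_right]
    · rcases Nat.eq_or_lt_of_le h2 with h' | h'
      · have : k' + 1 = m := by omega
        rw [← this, Nat.choose_succ_self_right]
      · have hkm : k' + 1 + 1 ≤ m := by omega
        have hih : m ≤ m.choose k' := ih k' (by omega) (by omega)
        have hpos : 0 < m.choose (k' + 1) := Nat.choose_pos (by omega)
        rw [Nat.choose_succ_succ]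
        have hrfl : m.choose k'.succ = m.choose (k' + 1) := rfl
        omega

lemma pascal (n k : ℕ) (hk : 1 ≤ k) : (n + 1).choose k = n.choose (k - 1) + n.choose k := by
  obtain ⟨k', rfl⟩ : ∃ k', k = k' + 1 := ⟨k - 1, by omega⟩
  simp [Nat.choose_succ_succ]

section MainBound

variable {V : Type*} [DecidableEq V]

lemma main_bound {s r : ℕ} (hs : 1 ≤ s) (hr : s + 2 ≤ r)
    (H : Finset (Finset V)) (hUni : IsUniform r H) (hM : ¬ HasM H (s + 1)) :
    H.card ≤ max s (Nat.choose (2 * s + 1) r) := by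
  by_cases hHs : H.card ≤ s
  · exact le_trans hHs (le_max_left _ _)
  push_neg at hHs
  have hbdd : ∀ k ∈ {k | HasM H k}, k ≤ s := by
    intro k hk
    by_contra hks
    exact hM (hasM_mono hk (by omega))
  have hne : ({k | HasM H k} : Set ℕ).Nonempty := ⟨0, hasM_zero H⟩
  set t := sSup {k | HasM H k} with htdef
  have ht : HasM H t := Nat.sSup_mem hne ⟨s, hbdd⟩
  have hts : t ≤ s := csSup_le hne hbdd
  have hmax : ∀ k, HasM H k → k ≤ t := fun k hk => le_csSup ⟨s, hbdd⟩ hk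
  obtain ⟨Q, hQ, hQc⟩ := ht
  set U := Q.biUnion Prod.fst with hUdef
  have hUcard : U.card ≤ 2 * t := by
    calc U.card ≤ ∑ q ∈ Q, q.1.card := Finset.card_biUnion_le
      _ ≤ ∑ _q ∈ Q, 2 := Finset.sum_le_sum (fun q hq => le_of_eq (hQ.1 q hq).2.2)
      _ = 2 * t := by rw [Finset.sum_const, smul_eq_mul, hQc]; ring
  set SP := Q.image Prod.snd with hSPdef
  have hSPcard : SP.card ≤ t := le_trans Finset.card_image_le (le_of_eq hQc)
  set NS := H \ SP with hNSdef
  have hsplitH : (H ∩ SP).card + NS.card = H.card := Finset.card_inter_add_card_sdiff H SP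
  have hinterle : (H ∩ SP).card ≤ t :=
    le_trans (Finset.card_le_card Finset.inter_subset_right) hSPcard
  have hHcard : H.card ≤ NS.card + t := by omega
  have hNSne : NS.Nonempty := Finset.card_pos.mp (by omega)
  have hensNS : ∀ e ∈ NS, ∀ q ∈ Q, q.2 ≠ e := by
    intro e he q hq h
    exact (Finset.mem_sdiff.mp he).2 (h ▸ Finset.mem_image_of_mem Prod.snd hq)
  have hNSH : ∀ e ∈ NS, e ∈ H := fun e he => (Finset.mem_sdiff.mp he).1
  have hrt : t + 2 ≤ r := by omega
  by_cases hAllU : ∀ e ∈ NS, e ⊆ U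
  · -- Branch A : all nonspecial edges inside U
    obtain ⟨e0, he0⟩ := hNSne
    have hrU : r ≤ U.card := by
      rw [← hUni e0 (hNSH e0 he0)]
      exact Finset.card_le_card (hAllU e0 he0)
    have hr2s : r ≤ 2 * s := by omega
    have hNScard : NS.card ≤ Nat.choose (2 * s) r := by
      calc NS.card ≤ (Finset.powersetCard r U).card := by
            refine Finset.card_le_card ?_
            intro e he
            exact Finset.mem_powersetCard.mpr ⟨hAllU e he, hUni e (hNSH e he)⟩
        _ = Nat.choose U.card r := Finset.card_powersetCard r U
        _ ≤ Nat.choose (2 * s) r := Nat.choose_mono r (by omega)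
    have hsle : 2 * s ≤ Nat.choose (2 * s) (r - 1) :=
      le_choose (2 * s) (r - 1) (by omega) (by omega)
    have hp1 : Nat.choose (2 * s + 1) r
        = Nat.choose (2 * s) (r - 1) + Nat.choose (2 * s) r := pascal (2 * s) r (by omega)
    have : H.card ≤ Nat.choose (2 * s + 1) r := by omega
    exact le_trans this (le_max_right _ _)
  · push_neg at hAllU
    obtain ⟨e0, he0, he0x⟩ := hAllU
    obtain ⟨x, hxe0, hxU⟩ := Finset.not_subset.mp he0x
    have hxs : x ∈ e0 \ U := Finset.mem_sdiff.mpr ⟨hxe0, hxU⟩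
    have hL2 : ∀ e ∈ NS, ∀ z ∈ e \ U, z = x := fun e he z hz =>
      outside_unique hrt hQ hQc hmax (hNSH e he) (hNSH e0 he0) (hensNS e he) (hensNS e0 he0)
        (hUni e (hNSH e he)) (hUni e0 (hNSH e0 he0)) hz hxs
    have hNSW : ∀ e ∈ NS, e ⊆ U ∪ {x} := by
      intro e he z hz
      by_cases hzU : z ∈ U
      · exact Finset.mem_union_left _ hzU
      · exact Finset.mem_union_right _
          (Finset.mem_singleton.mpr (hL2 e he z (Finset.mem_sdiff.mpr ⟨hz, hzU⟩)))
    by_cases hB1 : ∀ f ∈ H, f ⊆ U ∪ {x}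
    · -- Branch B1 : every edge inside W = U ∪ {x}
      have hWcard : (U ∪ {x}).card ≤ 2 * s + 1 := by
        have := Finset.card_union_le U ({x} : Finset V)
        have hx1 : ({x} : Finset V).card = 1 := Finset.card_singleton x
        omega
      have : H.card ≤ Nat.choose (2 * s + 1) r := by
        calc H.card ≤ (Finset.powersetCard r (U ∪ {x})).card := by
              refine Finset.card_le_card ?_
              intro f hf
              exact Finset.mem_powersetCard.mpr ⟨hB1 f hf, hUni f hf⟩
          _ = Nat.choose (U ∪ {x}).card r := Finset.card_powersetCard r _
          _ ≤ Nat.choose (2 * s + 1) r := Nat.choose_mono r hWcard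
      exact le_trans this (le_max_right _ _)
    · -- Branch B2 : some edge f has a vertex y outside W
      push_neg at hB1
      obtain ⟨f, hf, hfW⟩ := hB1
      obtain ⟨y, hyf, hyW⟩ := Finset.not_subset.mp hfW
      have hyU : y ∉ U := fun h => hyW (Finset.mem_union_left _ h)
      have hyx : y ≠ x := fun h => hyW (Finset.mem_union_right _ (Finset.mem_singleton.mpr h))
      have hfSP : f ∈ SP := by
        by_contra hfns
        exact hyW (hNSW f (Finset.mem_sdiff.mpr ⟨hf, hfns⟩) hyf)
      obtain ⟨q0, hq0, hq0f⟩ := Finset.mem_image.mp hfSP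
      have ht1 : 1 ≤ t := by
        rw [← hQc]; exact Finset.card_pos.mpr ⟨q0, hq0⟩
      have hq0U : q0.1 ⊆ U := fun z hz => Finset.mem_biUnion.mpr ⟨q0, hq0, hz⟩
      -- swap argument
      have swap : ∀ w z : V, q0.1 = {w, z} → ∀ e ∈ NS, z ∉ e := by
        intro w z hwz e he hze
        have hwq : w ∈ q0.1 := by rw [hwz]; exact Finset.mem_insert_self _ _
        have hzq : z ∈ q0.1 := by
          rw [hwz]; exact Finset.mem_insert_of_mem (Finset.mem_singleton_self _)
        have hwznq : w ≠ z := by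
          intro h
          have h2 := (hQ.1 q0 hq0).2.2
          rw [hwz, ← h] at h2
          simp at h2
        have hwU : w ∈ U := hq0U hwq
        have hzU : z ∈ U := hq0U hzq
        have hwy : w ≠ y := fun h => hyU (h ▸ hwU)
        have hQe : IsMatch H (Q.erase q0) := isMatch_subset hQ (Finset.erase_subset _ _)
        have hsubwy : ({w, y} : Finset V) ⊆ f := by
          intro z' hz'
          rcases Finset.mem_insert.mp hz' with rfl | hz'
          · exact hq0f ▸ (hQ.1 q0 hq0).2.1 hwq
          · rw [Finset.mem_singleton.mp hz']; exact hyf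
        obtain ⟨hins, hnm⟩ := isMatch_insert hQe hf hsubwy (Finset.card_pair hwy)
          (fun q hq => hq0f ▸
            (hQ.2 q (Finset.mem_of_mem_erase hq) q0 hq0 (Finset.ne_of_mem_erase hq)).1)
          (by
            intro q hq
            rw [Finset.disjoint_left]
            intro z' hz'
            rcases Finset.mem_insert.mp hz' with rfl | hz'
            · exact Finset.disjoint_left.mp
                ((hQ.2 q0 hq0 q (Finset.mem_of_mem_erase hq)
                  (Finset.ne_of_mem_erase hq).symm).2) hwq
            · rw [Finset.mem_singleton.mp hz']
              exact fun hy' =>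
                hyU (Finset.mem_biUnion.mpr ⟨q, Finset.mem_of_mem_erase hq, hy'⟩))
        set Q1 := insert (({w, y} : Finset V), f) (Q.erase q0) with hQ1def
        have hQ1c : Q1.card = t := by
          rw [hQ1def, Finset.card_insert_of_notMem hnm, Finset.card_erase_of_mem hq0, hQc]
          omega
        have hU1sub : ∀ z', z' ∈ Q1.biUnion Prod.fst → z' ∈ U ∨ z' = y := by
          intro z' hz'
          obtain ⟨q, hq, hzq1⟩ := Finset.mem_biUnion.mp hz'
          rcases Finset.mem_insert.mp hq with rfl | hq
          · rcases Finset.mem_insert.mp hzq1 with rfl | hzq1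
            · exact Or.inl hwU
            · exact Or.inr (Finset.mem_singleton.mp hzq1)
          · exact Or.inl (Finset.mem_biUnion.mpr ⟨q, Finset.mem_of_mem_erase hq, hzq1⟩)
        have hznotU1 : z ∉ Q1.biUnion Prod.fst := by
          intro hmem
          obtain ⟨q, hq, hzq1⟩ := Finset.mem_biUnion.mp hmem
          rcases Finset.mem_insert.mp hq with rfl | hq
          · rcases Finset.mem_insert.mp hzq1 with h | h
            · exact hwznq h.symm
            · exact hyU ((Finset.mem_singleton.mp h) ▸ hzU)
          · exact Finset.disjoint_left.mp
              ((hQ.2 q0 hq0 q (Finset.mem_of_mem_erase hq)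
                (Finset.ne_of_mem_erase hq).symm).2) hzq hzq1
        have hxnotU1 : x ∉ Q1.biUnion Prod.fst := by
          intro hmem
          rcases hU1sub x hmem with h | h
          · exact hxU h
          · exact hyx h.symm
        have hens1 : ∀ e' ∈ NS, ∀ q ∈ Q1, q.2 ≠ e' := by
          intro e' he' q hq
          rcases Finset.mem_insert.mp hq with rfl | hq
          · intro h
            exact (Finset.mem_sdiff.mp he').2 (h ▸ hfSP)
          · exact hensNS e' he' q (Finset.mem_of_mem_erase hq)
        have hzx := outside_unique hrt hins hQ1c hmax (hNSH e he) (hNSH e0 he0)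
          (hens1 e he) (hens1 e0 he0) (hUni e (hNSH e he)) (hUni e0 (hNSH e0 he0))
          (Finset.mem_sdiff.mpr ⟨hze, hznotU1⟩) (Finset.mem_sdiff.mpr ⟨hxe0, hxnotU1⟩)
        exact hxU (hzx ▸ hzU)
      obtain ⟨u, v, huv, hp0⟩ := Finset.card_eq_two.mp (hQ.1 q0 hq0).2.2
      have hvNS : ∀ e ∈ NS, v ∉ e := swap u v hp0
      have huNS : ∀ e ∈ NS, u ∉ e := swap v u (by rw [hp0]; exact Finset.pair_comm u v)
      set W2 := (U \ q0.1) ∪ {x} with hW2def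
      have hNSW2 : ∀ e ∈ NS, e ⊆ W2 := by
        intro e he z hz
        rcases Finset.mem_union.mp (hNSW e he hz) with hzU | hzx
        · refine Finset.mem_union_left _ (Finset.mem_sdiff.mpr ⟨hzU, ?_⟩)
          rw [hp0]
          intro hmem
          rcases Finset.mem_insert.mp hmem with rfl | hmem
          · exact huNS e he hz
          · exact hvNS e he ((Finset.mem_singleton.mp hmem) ▸ hz)
        · exact Finset.mem_union_right _ hzx
      have hW2card : W2.card ≤ 2 * s - 1 := by
        have h1 : (U \ q0.1).card = U.card - 2 := by
          rw [Finset.card_sdiff_of_subset hq0U, (hQ.1 q0 hq0).2.2]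
        have h2 : W2.card ≤ (U \ q0.1).card + ({x} : Finset V).card :=
          Finset.card_union_le _ _
        have hx1 : ({x} : Finset V).card = 1 := Finset.card_singleton x
        omega
      obtain ⟨e0', he0'⟩ := hNSne
      have hrW2 : r ≤ W2.card := by
        rw [← hUni e0 (hNSH e0 he0)]
        exact Finset.card_le_card (hNSW2 e0 he0)
      have hNScard : NS.card ≤ Nat.choose (2 * s - 1) r := by
        calc NS.card ≤ (Finset.powersetCard r W2).card := by
              refine Finset.card_le_card ?_
              intro e he
              exact Finset.mem_powersetCard.mpr ⟨hNSW2 e he, hUni e (hNSH e he)⟩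
          _ = Nat.choose W2.card r := Finset.card_powersetCard r _
          _ ≤ Nat.choose (2 * s - 1) r := Nat.choose_mono r hW2card
      have hp1 : Nat.choose (2 * s + 1) r
          = Nat.choose (2 * s) (r - 1) + Nat.choose (2 * s) r := pascal (2 * s) r (by omega)
      have hp2' := pascal (2 * s - 1) r (by omega)
      have h2seq : 2 * s - 1 + 1 = 2 * s := by omega
      rw [h2seq] at hp2'
      have hsle : 2 * s - 1 ≤ Nat.choose (2 * s - 1) (r - 1) :=
        le_choose (2 * s - 1) (r - 1) (by omega) (by omega)
      have : H.card ≤ Nat.choose (2 * s + 1) r := by omega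
      exact le_trans this (le_max_right _ _)

end MainBound

lemma containsBerge_matching {V : Type*} [DecidableEq V] {H : Finset (Finset V)} {k : ℕ}
    (hk : 0 < k) (h : HasM H k) : ContainsBerge (matchingHG k) H := by
  obtain ⟨Q, hQ, hQc⟩ := h
  haveI : NeZero k := ⟨by omega⟩
  let σ : {q // q ∈ Q} ≃ Fin k := Finset.equivFinOfCardEq hQc
  set q : Fin k → Finset V × Finset V := fun i => (σ.symm i : {q // q ∈ Q}).1 with hqdef
  have hqmem : ∀ i, q i ∈ Q := fun i => (σ.symm i).2
  have hqinj : Function.Injective q := by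
    intro i j hij
    exact σ.symm.injective (Subtype.ext hij)
  have hpair : ∀ i, ∃ a b : V, a ≠ b ∧ (q i).1 = {a, b} :=
    fun i => Finset.card_eq_two.mp (hQ.1 _ (hqmem i)).2.2
  choose a b hab hP using hpair
  have hqd : ∀ i j, i ≠ j → Disjoint (q i).1 (q j).1 :=
    fun i j hij => (hQ.2 _ (hqmem i) _ (hqmem j) (fun h' => hij (hqinj h'))).2
  set g : Fin k × Fin 2 → V := fun z => if z.2 = 0 then a z.1 else b z.1 with hgdef
  have hfin2 : ∀ u : Fin 2, u = 0 ∨ u = 1 := by decide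
  have hg0 : ∀ i, g (i, 0) = a i := fun i => if_pos rfl
  have hg1 : ∀ i, g (i, 1) = b i := by
    intro i
    rw [hgdef]
    simp [Fin.ext_iff]
  have hgmem : ∀ z : Fin k × Fin 2, g z ∈ (q z.1).1 := by
    intro z
    rw [hP z.1]
    by_cases h0 : z.2 = 0 <;> simp [hgdef, h0]
  have hginj : Function.Injective g := by
    intro z w hzw
    by_cases hfst : z.1 = w.1
    · have hsnd : z.2 = w.2 := by
        rcases hfin2 z.2 with h1 | h1 <;> rcases hfin2 w.2 with h2 | h2 <;>
          rw [h1, h2] <;> try rfl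
        · exfalso
          have hz' : g z = a z.1 := by rw [hgdef]; simp [h1]
          have hw' : g w = b w.1 := by rw [hgdef]; simp [h2, Fin.ext_iff]
          rw [hz', hw', ← hfst] at hzw
          exact hab z.1 hzw
        · exfalso
          have hz' : g z = b z.1 := by rw [hgdef]; simp [h1, Fin.ext_iff]
          have hw' : g w = a w.1 := by rw [hgdef]; simp [h2]
          rw [hz', hw', ← hfst] at hzw
          exact hab z.1 hzw.symm
      exact Prod.ext hfst hsnd
    · exfalso
      have h1 := hgmem z
      have h2 := hgmem w
      rw [hzw] at h1
      exact Finset.disjoint_left.mp (hqd z.1 w.1 hfst) (hzw ▸ hgmem z) h2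
  set pick : Finset (Fin k × Fin 2) → Fin k := fun e =>
    if h' : (e.image Prod.fst).Nonempty then (e.image Prod.fst).min' h' else 0 with hpickdef
  set φ : Finset (Fin k × Fin 2) → Finset V := fun e => (q (pick e)).2 with hφdef
  have hMpick : ∀ i : Fin k, pick ({(i, 0), (i, 1)} : Finset (Fin k × Fin 2)) = i := by
    intro i
    have himg : (({(i, 0), (i, 1)} : Finset (Fin k × Fin 2)).image Prod.fst) = {i} := by
      rw [Finset.image_insert, Finset.image_singleton]
      simp
    rw [hpickdef]
    simp only [himg]
    rw [dif_pos (Finset.singleton_nonempty i)]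
    exact Finset.min'_singleton i
  have hmemM : ∀ e ∈ matchingHG k, ∃ i : Fin k, ({(i, 0), (i, 1)} : Finset (Fin k × Fin 2)) = e := by
    intro e he
    obtain ⟨i, _, hi⟩ := Finset.mem_image.mp he
    exact ⟨i, hi⟩
  refine ⟨g, φ, hginj, ?_, ?_, ?_⟩
  · intro e he e' he' hφe
    obtain ⟨i, rfl⟩ := hmemM e (Finset.mem_coe.mp he)
    obtain ⟨j, rfl⟩ := hmemM e' (Finset.mem_coe.mp he')
    rw [hφdef] at hφe
    simp only [hMpick] at hφe
    by_cases hij : i = j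
    · rw [hij]
    · exact absurd hφe (hQ.2 _ (hqmem i) _ (hqmem j) (fun h' => hij (hqinj h'))).1
  · intro e he
    obtain ⟨i, rfl⟩ := hmemM e he
    rw [hφdef]
    simp only [hMpick]
    exact (hQ.1 _ (hqmem i)).1
  · intro e he
    obtain ⟨i, rfl⟩ := hmemM e he
    rw [hφdef]
    simp only [hMpick]
    rw [Finset.image_insert, Finset.image_singleton]
    refine Finset.Subset.trans ?_ ((hQ.1 _ (hqmem i)).2.1)
    rw [hP i, hg0, hg1]

/-- Theorem: let `G` be a bipartite graph (with at least one edge) with `p = p(G)`.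
If `p ≤ s < r-1`, then for all sufficiently large `n`,
`ex_r(n, BM_{s+1} ∪ BG) ≤ max { s, C(2s+1, r) }`. -/
theorem exr_berge_matching_and_berge_bipartite_ii
    (s r m p : ℕ) (hs : 1 ≤ s) (hr : 2 ≤ r)
    (G : Finset (Finset (Fin m))) (hG2 : IsUniform 2 G) (hGne : G.Nonempty)
    (hpmin : (∃ red : Finset (Fin m), ProperRB G red ∧ red.card = p) ∧
      ∀ red : Finset (Fin m), ProperRB G red → p ≤ red.card)
    (hps : p ≤ s) (hsr : s < r - 1) :
    ∃ n₀ : ℕ, ∀ n : ℕ, n₀ ≤ n →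
      exr n r (fun H => ¬ ContainsBerge (matchingHG (s + 1)) H ∧
          ¬ ContainsBerge G H) ≤
        max s (Nat.choose (2 * s + 1) r) := by
  refine ⟨0, fun n _ => ?_⟩
  apply csSup_le
  · refine ⟨0, ∅, ?_, ⟨?_, ?_⟩, rfl⟩
    · intro e he
      exact absurd he (Finset.notMem_empty e)
    · rintro ⟨g, φ, -, -, hmem, -⟩
      have h0 : ({((0 : Fin (s + 1)), (0 : Fin 2)), (0, 1)} : Finset (Fin (s + 1) × Fin 2))
          ∈ matchingHG (s + 1) :=
        Finset.mem_image_of_mem _ (Finset.mem_univ (0 : Fin (s + 1)))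
      exact absurd (hmem _ h0) (Finset.notMem_empty _)
    · rintro ⟨g, φ, -, -, hmem, -⟩
      obtain ⟨e0, he0⟩ := hGne
      exact absurd (hmem e0 he0) (Finset.notMem_empty _)
  · rintro b ⟨H, hUnif, ⟨hFree1, _⟩, rfl⟩
    refine main_bound hs (by omega) H hUnif ?_
    intro hhas
    exact hFree1 (containsBerge_matching (by omega) hhas)
end
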